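/- arXiv:2406.06505 — 7 statements merged into one kernel-verified Lean document; each statement's English description precedes it below -/
import Mathlib

section
/- On the integer lattice ℤⁿ with standard weights (ω(x,y)=1 if x∼y, μ ≡ 2n), for the function φ(t) = −K t^β − 1 with K > 0 and 0 < β < 1, and Z(x) := φ(|x|²) = −K|x|^{2β} − 1, there exists a constant c > 0 (independent of K) such that ΔZ(x) ≥ −cK|x|^{2β−2} for all x ∈ ℤⁿ with |x| ≥ 1. -/
open scoped Classical

/-- Adjacency in the integer lattice `ℤⁿ`: `y` differs from `x` in exactly one
coordinate, by `±1`. -/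
def latAdj {n : ℕ} (x y : Fin n → ℤ) : Prop :=
  ∃ k, (y k = x k + 1 ∨ y k = x k - 1) ∧ ∀ i, i ≠ k → y i = x i

/-- The standard edge weight on `ℤⁿ`: `1` on edges, `0` otherwise. -/
noncomputable def latw {n : ℕ} (x y : Fin n → ℤ) : ℝ := if latAdj x y then 1 else 0

/-- `|x|²`, the squared euclidean norm of a lattice point. -/
noncomputable def nsq {n : ℕ} (x : Fin n → ℤ) : ℝ := ∑ k, ((x k : ℝ))^2

/-- `|x|`, the euclidean norm of a lattice point. -/
noncomputable def nrm {n : ℕ} (x : Fin n → ℤ) : ℝ := Real.sqrt (nsq x)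

/-- The graph Laplacian on `ℤⁿ` with node measure `μ ≡ 2n`:
`Δf(x) = (1/2n) Σ_{y∼x} (f(y) - f(x))`. -/
noncomputable def latLap {n : ℕ} (f : (Fin n → ℤ) → ℝ) (x : Fin n → ℤ) : ℝ :=
  (1 / (2 * (n : ℝ))) * ∑' y, latw x y * (f y - f x)

/-! Auxiliary material -/

lemma nsq_nonneg {n : ℕ} (x : Fin n → ℤ) : 0 ≤ nsq x :=
  Finset.sum_nonneg fun _ _ => sq_nonneg _

/-- Tangent-line bound for the concave function `t ↦ t ^ β`. -/
lemma stmt6_tangent {t s β : ℝ} (ht : 0 < t) (hs : 0 ≤ s) (hβ : 0 ≤ β) (hβ1 : β ≤ 1) :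
    s ^ β - t ^ β ≤ β * t ^ (β - 1) * (s - t) := by
  have hu : -1 ≤ s / t - 1 := by
    have : 0 ≤ s / t := div_nonneg hs ht.le
    linarith
  have hb := rpow_one_add_le_one_add_mul_self hu hβ hβ1
  rw [add_sub_cancel] at hb
  have h1 : s ^ β = t ^ β * (s / t) ^ β := by
    rw [← Real.mul_rpow ht.le (div_nonneg hs ht.le), mul_div_cancel₀ _ ht.ne']
  have h2 : t ^ β * (1 + β * (s / t - 1)) = t ^ β + β * (t ^ β / t) * (s - t) := by
    field_simp
  have h3 : t ^ β / t = t ^ (β - 1) := by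
    rw [Real.rpow_sub ht, Real.rpow_one]
  calc s ^ β - t ^ β ≤ t ^ β * (1 + β * (s / t - 1)) - t ^ β := by
        nlinarith [Real.rpow_nonneg ht.le β, h1]
    _ = β * t ^ (β - 1) * (s - t) := by rw [h2, h3]; ring

lemma nsq_update {n : ℕ} (x : Fin n → ℤ) (k : Fin n) (v : ℤ) :
    nsq (Function.update x k v) = nsq x - ((x k : ℝ))^2 + ((v : ℝ))^2 := by
  unfold nsq
  have h : ∀ j, ((Function.update x k v j : ℝ))^2
      = Function.update (fun j => ((x j : ℝ))^2) k (((v:ℝ))^2) j := by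
    intro j
    by_cases h : j = k
    · subst h; simp
    · simp [Function.update_of_ne h]
  simp_rw [h]
  rw [Finset.sum_update_of_mem (Finset.mem_univ k)]
  rw [Finset.sum_eq_sum_sdiff_singleton_add (Finset.mem_univ k) (fun j => ((x j:ℝ))^2)]
  ring

/-- The neighbours of `x` in `ℤⁿ`, parametrised by a coordinate and a sign. -/
def nbr {n : ℕ} (x : Fin n → ℤ) (p : Fin n × Bool) : Fin n → ℤ :=
  Function.update x p.1 (x p.1 + if p.2 then 1 else -1)

lemma latAdj_nbr {n : ℕ} (x : Fin n → ℤ) (p : Fin n × Bool) : latAdj x (nbr x p) := by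
  refine ⟨p.1, ?_, fun i hi => Function.update_of_ne hi _ _⟩
  cases hb : p.2 <;> simp [nbr, hb, sub_eq_add_neg]

lemma nbr_inj {n : ℕ} (x : Fin n → ℤ) : Function.Injective (nbr x) := by
  rintro ⟨kp, bp⟩ ⟨kq, bq⟩ h
  have h1 := congrFun h kp
  simp only [nbr] at h1
  have hpq : kp = kq := by
    by_contra hne
    rw [Function.update_self, Function.update_of_ne hne] at h1
    cases bp <;> simp at h1
  subst hpq
  rw [Function.update_self, Function.update_self] at h1
  have : bp = bq := by
    cases bp <;> cases bq <;> simp_all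
  rw [this]

lemma adj_eq_nbr {n : ℕ} {x y : Fin n → ℤ} (h : latAdj x y) : ∃ p, y = nbr x p := by
  obtain ⟨k, hk, ho⟩ := h
  rcases hk with h1 | h1
  · refine ⟨(k, true), funext fun i => ?_⟩
    by_cases hik : i = k
    · subst hik; simpa [nbr] using h1
    · simp [nbr, Function.update_of_ne hik, ho i hik]
  · refine ⟨(k, false), funext fun i => ?_⟩
    by_cases hik : i = k
    · subst hik; simp [nbr, sub_eq_add_neg] at h1 ⊢; omega
    · simp [nbr, Function.update_of_ne hik, ho i hik]

lemma nsq_nbr {n : ℕ} (x : Fin n → ℤ) (p : Fin n × Bool) :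
    nsq (nbr x p) = nsq x + 2 * (if p.2 then (1:ℝ) else -1) * (x p.1 : ℝ) + 1 := by
  obtain ⟨k, b⟩ := p
  cases b <;> simp [nbr, nsq_update] <;> ring

lemma nrm_rpow {n : ℕ} (x : Fin n → ℤ) (a : ℝ) : nrm x ^ (2 * a) = nsq x ^ a := by
  rw [nrm, Real.sqrt_eq_rpow, ← Real.rpow_mul (nsq_nonneg x)]
  congr 1
  ring

/-- for `Z(x) = -K |x|^{2β} - 1` with `K > 0`, `0 < β < 1`, there is `c > 0`
(independent of `K`) with `ΔZ(x) ≥ -c K |x|^{2β-2}` for all `x ∈ ℤⁿ` with `|x| ≥ 1`. -/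
theorem stmt6 {n : ℕ} (hn : 0 < n) (β : ℝ) (hβ : 0 < β) (hβ1 : β < 1) :
    ∃ c : ℝ, 0 < c ∧ ∀ K : ℝ, 0 < K → ∀ x : Fin n → ℤ, 1 ≤ nrm x →
      latLap (fun y => -K * nrm y ^ (2 * β) - 1) x ≥ -c * K * nrm x ^ (2 * β - 2) := by
  refine ⟨β, hβ, ?_⟩
  intro K hK x hx
  set Z : (Fin n → ℤ) → ℝ := fun y => -K * nrm y ^ (2 * β) - 1 with hZ
  set t : ℝ := nsq x with htdef
  have ht1 : 1 ≤ t := by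
    have h := Real.sq_sqrt (nsq_nonneg x)
    have : 1 ≤ Real.sqrt (nsq x) := hx
    nlinarith
  have htpos : (0:ℝ) < t := by linarith
  -- rewrite Z in terms of nsq
  have hZval : ∀ y : Fin n → ℤ, Z y = -K * nsq y ^ β - 1 := by
    intro y
    rw [hZ]
    simp only
    rw [nrm_rpow]
  -- the tsum is a finite sum over the 2n neighbours
  have hsum : ∑' y, latw x y * (Z y - Z x) = ∑ p : Fin n × Bool, (Z (nbr x p) - Z x) := by
    have hsupp : ∀ y ∉ Finset.image (nbr x) Finset.univ, latw x y * (Z y - Z x) = 0 := by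
      intro y hy
      rw [latw, if_neg, zero_mul]
      intro hadj
      obtain ⟨p, rfl⟩ := adj_eq_nbr hadj
      exact hy (Finset.mem_image_of_mem _ (Finset.mem_univ p))
    rw [tsum_eq_sum hsupp,
      Finset.sum_image (fun p _ q _ h => nbr_inj x h)]
    refine Finset.sum_congr rfl fun p _ => ?_
    rw [latw, if_pos (latAdj_nbr x p), one_mul]
  -- per-term lower bound
  have hterm : ∀ p : Fin n × Bool,
      Z (nbr x p) - Z x ≥ -(K * β * t ^ (β - 1)) * (nsq (nbr x p) - t) := by
    intro p
    have htan := stmt6_tangent htpos (nsq_nonneg (nbr x p)) hβ.le hβ1.le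
    rw [hZval, hZval]
    rw [← htdef]
    nlinarith [htan, hK.le]
  -- sum of the linear parts
  have hlin : ∑ p : Fin n × Bool, (nsq (nbr x p) - t) = 2 * n := by
    have : ∀ p : Fin n × Bool,
        nsq (nbr x p) - t = 2 * (if p.2 then (1:ℝ) else -1) * (x p.1 : ℝ) + 1 := by
      intro p; rw [nsq_nbr, ← htdef]; ring
    simp_rw [this]
    rw [Fintype.sum_prod_type]
    have hk : ∀ k : Fin n,
        ∑ b : Bool, (2 * (if b then (1:ℝ) else -1) * (x k : ℝ) + 1) = 2 := by
      intro k
      rw [Fintype.sum_bool]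
      simp; ring
    simp_rw [hk]
    simp [mul_comm]
  -- assemble
  have hS : ∑ p : Fin n × Bool, (Z (nbr x p) - Z x)
      ≥ -(K * β * t ^ (β - 1)) * (2 * n) := by
    calc ∑ p : Fin n × Bool, (Z (nbr x p) - Z x)
        ≥ ∑ p : Fin n × Bool, -(K * β * t ^ (β - 1)) * (nsq (nbr x p) - t) :=
          Finset.sum_le_sum fun p _ => hterm p
      _ = -(K * β * t ^ (β - 1)) * ∑ p : Fin n × Bool, (nsq (nbr x p) - t) := by
          rw [Finset.mul_sum]
      _ = -(K * β * t ^ (β - 1)) * (2 * n) := by rw [hlin]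
  have hfin : nrm x ^ (2 * β - 2) = t ^ (β - 1) := by
    have : 2 * β - 2 = 2 * (β - 1) := by ring
    rw [this, nrm_rpow, htdef]
  rw [latLap, hsum, hfin]
  have hnpos : (0:ℝ) < 2 * n := by positivity
  have h1 : (1 / (2 * (n:ℝ))) * ∑ p : Fin n × Bool, (Z (nbr x p) - Z x)
      ≥ (1 / (2 * (n:ℝ))) * (-(K * β * t ^ (β - 1)) * (2 * n)) := by
    apply mul_le_mul_of_nonneg_left hS (by positivity)
  calc (1 / (2 * (n:ℝ))) * ∑ p : Fin n × Bool, (Z (nbr x p) - Z x)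
      ≥ (1 / (2 * (n:ℝ))) * (-(K * β * t ^ (β - 1)) * (2 * n)) := h1
    _ = -β * K * t ^ (β - 1) := by
        rw [mul_comm (-(K * β * t ^ (β - 1)))]
        rw [← mul_assoc, one_div, inv_mul_cancel₀ hnpos.ne', one_mul]
        ring
end

section
/- Let (G, ω, μ) be a connected, locally finite weighted graph, let Ω ⊂ G be finite, and let V : G → ℝ be nonnegative. Suppose the outer degree satisfies 0 ≤ 𝔇₊(x) ≤ k₀ for all x with ρ(x,Ω) ≥ 1, and V(x) ≥ c₀(1 + ρ(x,Ω))^{−α} for all x, with α ∈ [0,1), c₀ > 0. Then the spherically symmetric function Z(x) = −M·ρ(x,Ω)^{1−α} − 1 with 0 < M ≤ c₀/((1−α)·2^α·k₀) satisfies ΔZ(x) ≥ −V(x) for all x ∈ G with ρ(x,Ω) ≥ 1. -/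
open scoped Classical

/-- The weighted graph Laplacian `Δf(x) = (1/μ(x)) Σ_y ω(x,y)(f(y) - f(x))`. -/
noncomputable def graphLap {G : Type*} (μ : G → ℝ) (ω : G → G → ℝ) (f : G → ℝ) (x : G) : ℝ :=
  (1 / μ x) * ∑' y, ω x y * (f y - f x)

/-- The combinatorial distance `ρ(x,Ω) = min_{y ∈ Ω} ρ(x,y)` from a point to a finite set,
`ρ` being the combinatorial graph distance of the graph `H`. -/
noncomputable def rhoSet {G : Type*} (H : SimpleGraph G) (Ω : Finset G) (x : G) : ℕ :=
  sInf ((fun y => H.dist x y) '' ↑Ω)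

/-- The outer degree `𝔇₊(x) = (1/μ(x)) Σ_{y ∈ S_{r+1}(Ω)} ω(x,y)`, where `r = ρ(x,Ω)`. -/
noncomputable def outDeg {G : Type*} (μ : G → ℝ) (ω : G → G → ℝ) (H : SimpleGraph G)
    (Ω : Finset G) (x : G) : ℝ :=
  (1 / μ x) * ∑' y, Set.indicator {z : G | rhoSet H Ω z = rhoSet H Ω x + 1} (ω x) y

/-- The inner degree `𝔇₋(x) = (1/μ(x)) Σ_{y ∈ S_{r-1}(Ω)} ω(x,y)`, where `r = ρ(x,Ω)`. -/
noncomputable def inDeg {G : Type*} (μ : G → ℝ) (ω : G → G → ℝ) (H : SimpleGraph G)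
    (Ω : Finset G) (x : G) : ℝ :=
  (1 / μ x) * ∑' y, Set.indicator {z : G | rhoSet H Ω z = rhoSet H Ω x - 1} (ω x) y

lemma key_rpow (α : ℝ) (hα : 0 ≤ α) (hα1 : α < 1) (r : ℝ) (hr : 1 ≤ r) :
    (r + 1) ^ (1 - α) - r ^ (1 - α) ≤ (1 - α) * r ^ (-α) := by
  have hr0 : (0:ℝ) < r := lt_of_lt_of_le one_pos hr
  have h1 : r + 1 = r * (1 + 1 / r) := by field_simp
  have h2 : (r + 1) ^ (1 - α) = r ^ (1 - α) * (1 + 1 / r) ^ (1 - α) := by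
    rw [h1, Real.mul_rpow hr0.le (by positivity)]
  have hbern : (1 + 1 / r) ^ (1 - α) ≤ 1 + (1 - α) * (1 / r) :=
    rpow_one_add_le_one_add_mul_self (by linarith [one_div_pos.mpr hr0]) (by linarith) (by linarith)
  have h3 : (r + 1) ^ (1 - α) ≤ r ^ (1 - α) * (1 + (1 - α) * (1 / r)) := by
    rw [h2]; exact mul_le_mul_of_nonneg_left hbern (Real.rpow_nonneg hr0.le _)
  have h4 : r ^ (1 - α) * (1 / r) = r ^ (-α) := by
    rw [one_div, ← Real.rpow_neg_one r, ← Real.rpow_add hr0]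
    congr 1; ring
  calc (r + 1) ^ (1 - α) - r ^ (1 - α)
      ≤ r ^ (1 - α) * (1 + (1 - α) * (1 / r)) - r ^ (1 - α) := by linarith
    _ = (1 - α) * (r ^ (1 - α) * (1 / r)) := by ring
    _ = (1 - α) * r ^ (-α) := by rw [h4]

lemma key_rpow2 (α : ℝ) (hα : 0 ≤ α) (r : ℝ) (hr : 1 ≤ r) :
    r ^ (-α) ≤ (2:ℝ) ^ α * (1 + r) ^ (-α) := by
  have hr0 : (0:ℝ) < r := lt_of_lt_of_le one_pos hr
  have h1 : (1 + r) ^ (-α) ≥ (2 * r) ^ (-α) :=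
    Real.rpow_le_rpow_of_nonpos (by linarith) (by linarith) (by linarith)
  have h2 : (2 * r) ^ (-α) = (2:ℝ) ^ (-α) * r ^ (-α) :=
    Real.mul_rpow (by norm_num) hr0.le
  have h3 : (2:ℝ) ^ α * (2:ℝ) ^ (-α) = 1 := by
    rw [← Real.rpow_add (by norm_num)]; norm_num
  calc r ^ (-α) = (2:ℝ) ^ α * ((2:ℝ) ^ (-α) * r ^ (-α)) := by
        rw [← mul_assoc, h3, one_mul]
    _ = (2:ℝ) ^ α * (2 * r) ^ (-α) := by rw [h2]
    _ ≤ (2:ℝ) ^ α * (1 + r) ^ (-α) := by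
        apply mul_le_mul_of_nonneg_left h1 (by positivity)

/-- barrier construction for `α ∈ [0,1)`: if `0 ≤ 𝔇₊ ≤ k₀` on
`{ρ(·,Ω) ≥ 1}`, `V(x) ≥ c₀(1+ρ(x,Ω))^{-α}`, and `0 < M ≤ c₀/((1-α)·2^α·k₀)`, then
`Z(x) = -M ρ(x,Ω)^{1-α} - 1` satisfies `ΔZ(x) ≥ -V(x)` for all `x` with `ρ(x,Ω) ≥ 1`. -/
theorem stmt8 {G : Type*} (μ : G → ℝ) (ω : G → G → ℝ) (H : SimpleGraph G)
    (hμ : ∀ x, 0 < μ x) (hsym : ∀ x y, ω x y = ω y x) (hdiag : ∀ x, ω x x = 0)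
    (hnn : ∀ x y, 0 ≤ ω x y) (hadj : ∀ x y, H.Adj x y ↔ 0 < ω x y)
    (hconn : H.Connected) (hlf : ∀ x, (Function.support (ω x)).Finite)
    (Ω : Finset G) (hΩ : Ω.Nonempty)
    (V : G → ℝ) (α c₀ k₀ M : ℝ)
    (hα : 0 ≤ α) (hα1 : α < 1) (hc₀ : 0 < c₀) (hk₀ : 0 < k₀)
    (hD : ∀ x, 1 ≤ rhoSet H Ω x → 0 ≤ outDeg μ ω H Ω x ∧ outDeg μ ω H Ω x ≤ k₀)
    (hV : ∀ x, c₀ * (1 + (rhoSet H Ω x : ℝ)) ^ (-α) ≤ V x)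
    (hM : 0 < M) (hM' : M ≤ c₀ / ((1 - α) * (2 : ℝ) ^ α * k₀)) :
    ∀ x, 1 ≤ rhoSet H Ω x →
      graphLap μ ω (fun y => -M * ((rhoSet H Ω y : ℝ)) ^ (1 - α) - 1) x ≥ -V x := by
  intro x hr
  set Z : G → ℝ := fun y => -M * ((rhoSet H Ω y : ℝ)) ^ (1 - α) - 1 with hZ
  have hrr : (1:ℝ) ≤ (rhoSet H Ω x : ℝ) := by exact_mod_cast hr
  -- Lipschitz property of rhoSet
  have hlip : ∀ y, H.Adj x y → rhoSet H Ω y ≤ rhoSet H Ω x + 1 := by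
    intro y hxy
    have hne : ((fun w => H.dist x w) '' ↑Ω).Nonempty := by
      obtain ⟨w, hw⟩ := hΩ
      exact ⟨H.dist x w, ⟨w, by simpa using hw, rfl⟩⟩
    obtain ⟨w, hw, hwd⟩ := Nat.sInf_mem hne
    have h1 : rhoSet H Ω y ≤ H.dist y w :=
      Nat.sInf_le ⟨w, hw, rfl⟩
    have h2 : H.dist y w ≤ H.dist y x + H.dist x w :=
      hconn.dist_triangle
    have h3 : H.dist y x = 1 := SimpleGraph.dist_eq_one_iff_adj.mpr hxy.symm
    have h4 : H.dist x w = rhoSet H Ω x := hwd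
    omega
  -- the key deficit
  set δ : ℝ := ((rhoSet H Ω x : ℝ) + 1) ^ (1 - α) - ((rhoSet H Ω x : ℝ)) ^ (1 - α) with hδ
  have hδ0 : 0 ≤ δ := by
    have := Real.rpow_le_rpow (by positivity) (by linarith : (rhoSet H Ω x : ℝ) ≤ (rhoSet H Ω x : ℝ) + 1) (by linarith : (0:ℝ) ≤ 1 - α)
    simp only [hδ]; linarith
  -- pointwise bound
  have hpt : ∀ y, (-(M * δ)) * Set.indicator {z : G | rhoSet H Ω z = rhoSet H Ω x + 1} (ω x) y
      ≤ ω x y * (Z y - Z x) := by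
    intro y
    by_cases hy : rhoSet H Ω y = rhoSet H Ω x + 1
    · have hind : Set.indicator {z : G | rhoSet H Ω z = rhoSet H Ω x + 1} (ω x) y = ω x y :=
        Set.indicator_of_mem (show y ∈ {z : G | rhoSet H Ω z = rhoSet H Ω x + 1} from hy) (ω x)
      rw [hind]
      have hzy : Z y - Z x = -(M * δ) := by
        simp only [hZ, hδ, hy]
        push_cast
        ring
      rw [hzy]
      rw [mul_comm (ω x y)]
    · have hind : Set.indicator {z : G | rhoSet H Ω z = rhoSet H Ω x + 1} (ω x) y = 0 :=
        Set.indicator_of_notMem (show y ∉ {z : G | rhoSet H Ω z = rhoSet H Ω x + 1} from hy) (ω x)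
      rw [hind, mul_zero]
      rcases eq_or_lt_of_le (hnn x y) with h0 | h0
      · rw [← h0, zero_mul]
      · apply mul_nonneg h0.le
        have hadjxy : H.Adj x y := (hadj x y).mpr h0
        have hle : rhoSet H Ω y ≤ rhoSet H Ω x := by
          have := hlip y hadjxy; omega
        have hle' : ((rhoSet H Ω y : ℝ)) ^ (1 - α) ≤ ((rhoSet H Ω x : ℝ)) ^ (1 - α) :=
          Real.rpow_le_rpow (by positivity) (by exact_mod_cast hle) (by linarith)
        simp only [hZ]
        nlinarith
  -- summability
  have hs1 : Summable (fun y => ω x y * (Z y - Z x)) := by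
    apply summable_of_ne_finset_zero (s := (hlf x).toFinset)
    intro y hy
    have : ω x y = 0 := by
      by_contra h
      exact hy ((hlf x).mem_toFinset.mpr h)
    rw [this, zero_mul]
  have hs2 : Summable (fun y => Set.indicator {z : G | rhoSet H Ω z = rhoSet H Ω x + 1} (ω x) y) := by
    apply summable_of_ne_finset_zero (s := (hlf x).toFinset)
    intro y hy
    have h0 : ω x y = 0 := by
      by_contra h
      exact hy ((hlf x).mem_toFinset.mpr h)
    by_cases hy' : y ∈ {z : G | rhoSet H Ω z = rhoSet H Ω x + 1}
    · rw [Set.indicator_of_mem hy', h0]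
    · rw [Set.indicator_of_notMem hy']
  -- tsum comparison
  have htsum : (-(M * δ)) * (∑' y, Set.indicator {z : G | rhoSet H Ω z = rhoSet H Ω x + 1} (ω x) y)
      ≤ ∑' y, ω x y * (Z y - Z x) := by
    rw [← tsum_mul_left]
    exact Summable.tsum_le_tsum hpt (hs2.mul_left _) hs1
  -- pass through (1/μ x)
  have hμx : 0 < 1 / μ x := one_div_pos.mpr (hμ x)
  have hstep : (-(M * δ)) * outDeg μ ω H Ω x ≤ graphLap μ ω Z x := by
    have := mul_le_mul_of_nonneg_left htsum hμx.le
    unfold graphLap outDeg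
    calc -(M * δ) * ((1 / μ x) * ∑' y, Set.indicator {z : G | rhoSet H Ω z = rhoSet H Ω x + 1} (ω x) y)
        = (1 / μ x) * ((-(M * δ)) * ∑' y, Set.indicator {z : G | rhoSet H Ω z = rhoSet H Ω x + 1} (ω x) y) := by ring
      _ ≤ (1 / μ x) * ∑' y, ω x y * (Z y - Z x) := this
  -- bound via k₀
  obtain ⟨hD0, hDk⟩ := hD x hr
  have hstep2 : (-(M * δ)) * k₀ ≤ (-(M * δ)) * outDeg μ ω H Ω x := by
    apply mul_le_mul_of_nonpos_left hDk
    nlinarith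
  -- analytic bound
  have hkey : M * δ * k₀ ≤ V x := by
    have h1 : δ ≤ (1 - α) * ((rhoSet H Ω x : ℝ)) ^ (-α) :=
      key_rpow α hα hα1 _ hrr
    have h2 : ((rhoSet H Ω x : ℝ)) ^ (-α) ≤ (2:ℝ) ^ α * (1 + (rhoSet H Ω x : ℝ)) ^ (-α) :=
      key_rpow2 α hα _ hrr
    have hp1 : (0:ℝ) < (2:ℝ) ^ α := by positivity
    have hp2 : (0:ℝ) < (1 + (rhoSet H Ω x : ℝ)) ^ (-α) := Real.rpow_pos_of_pos (by linarith) _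
    have hpos : 0 < (1 - α) * (2:ℝ) ^ α * k₀ := mul_pos (mul_pos (by linarith) hp1) hk₀
    have hM'' : M * ((1 - α) * (2:ℝ) ^ α * k₀) ≤ c₀ := (le_div_iff₀ hpos).mp hM'
    have hα' : (0:ℝ) ≤ 1 - α := by linarith
    calc M * δ * k₀ ≤ M * ((1 - α) * ((rhoSet H Ω x : ℝ)) ^ (-α)) * k₀ := by
          gcongr
      _ ≤ M * ((1 - α) * ((2:ℝ) ^ α * (1 + (rhoSet H Ω x : ℝ)) ^ (-α))) * k₀ := by
          gcongr
      _ = (M * ((1 - α) * (2:ℝ) ^ α * k₀)) * (1 + (rhoSet H Ω x : ℝ)) ^ (-α) := by ring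
      _ ≤ c₀ * (1 + (rhoSet H Ω x : ℝ)) ^ (-α) := by
          gcongr
      _ ≤ V x := hV x
  have : -V x ≤ (-(M * δ)) * k₀ := by nlinarith
  calc -V x ≤ (-(M * δ)) * k₀ := this
    _ ≤ (-(M * δ)) * outDeg μ ω H Ω x := hstep2
    _ ≤ graphLap μ ω Z x := hstep
end

section
/- Let (G, ω, μ) be a connected, locally finite weighted graph with outer degree bounded: 0 ≤ 𝔇₊(x) ≤ k₀ for all x with r = ρ(x,Ω) ≥ 1 (Ω ⊂ G finite). For Z(x) = −M log(2 + ρ(x,Ω)), one has ΔZ(x) ≥ −M k₀/(2 + r) for all x ∈ G with r = ρ(x,Ω) ≥ 1. Consequently, if V(x) ≥ c₀(1 + ρ(x,Ω))^{−1} on G and 0 < M ≤ c₀/k₀, then ΔZ(x) ≥ −V(x) for all x with ρ(x,Ω) ≥ 1. -/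
open scoped Classical

/-- barrier construction for `α = 1`: if `0 ≤ 𝔇₊ ≤ k₀` on `{ρ(·,Ω) ≥ 1}`
and `Z(x) = -M log(2 + ρ(x,Ω))` with `M > 0`, then `ΔZ(x) ≥ -M k₀/(2 + ρ(x,Ω))` for all
`x` with `ρ(x,Ω) ≥ 1`; consequently, if moreover `V(x) ≥ c₀(1+ρ(x,Ω))⁻¹` on `G` and
`M ≤ c₀/k₀`, then `ΔZ(x) ≥ -V(x)` for all such `x`. -/
theorem stmt9 {G : Type*} (μ : G → ℝ) (ω : G → G → ℝ) (H : SimpleGraph G)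
    (hμ : ∀ x, 0 < μ x) (hsym : ∀ x y, ω x y = ω y x) (hdiag : ∀ x, ω x x = 0)
    (hnn : ∀ x y, 0 ≤ ω x y) (hadj : ∀ x y, H.Adj x y ↔ 0 < ω x y)
    (hconn : H.Connected) (hlf : ∀ x, (Function.support (ω x)).Finite)
    (Ω : Finset G) (hΩ : Ω.Nonempty) (k₀ M : ℝ) (hk₀ : 0 < k₀) (hM : 0 < M)
    (hD : ∀ x, 1 ≤ rhoSet H Ω x → 0 ≤ outDeg μ ω H Ω x ∧ outDeg μ ω H Ω x ≤ k₀) :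
    (∀ x, 1 ≤ rhoSet H Ω x →
      graphLap μ ω (fun y => -M * Real.log (2 + (rhoSet H Ω y : ℝ))) x ≥
        -(M * k₀) / (2 + (rhoSet H Ω x : ℝ))) ∧
    (∀ V : G → ℝ, ∀ c₀ : ℝ, 0 < c₀ →
      (∀ x, c₀ * (1 + (rhoSet H Ω x : ℝ))⁻¹ ≤ V x) → M ≤ c₀ / k₀ →
      ∀ x, 1 ≤ rhoSet H Ω x →
        graphLap μ ω (fun y => -M * Real.log (2 + (rhoSet H Ω y : ℝ))) x ≥ -V x) := by
  obtain ⟨w₀, hw₀⟩ := hΩ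
  -- basic facts about rhoSet
  have hle : ∀ z : G, ∀ w ∈ Ω, rhoSet H Ω z ≤ H.dist z w := by
    intro z w hw
    exact Nat.sInf_le ⟨w, hw, rfl⟩
  have hach : ∀ z : G, ∃ w ∈ Ω, rhoSet H Ω z = H.dist z w := by
    intro z
    have hne : ((fun y => H.dist z y) '' ↑Ω).Nonempty :=
      ⟨H.dist z w₀, ⟨w₀, hw₀, rfl⟩⟩
    obtain ⟨w, hw, hdw⟩ := Nat.sInf_mem hne
    exact ⟨w, hw, hdw.symm⟩
  have hstep : ∀ y z : G, H.Adj y z → rhoSet H Ω y ≤ rhoSet H Ω z + 1 := by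
    intro y z hadjyz
    obtain ⟨w, hwΩ, hwz⟩ := hach z
    have h1 : H.dist y z = 1 := SimpleGraph.dist_eq_one_iff_adj.mpr hadjyz
    calc rhoSet H Ω y ≤ H.dist y w := hle y w hwΩ
      _ ≤ H.dist y z + H.dist z w := hconn.dist_triangle
      _ = rhoSet H Ω z + 1 := by rw [h1, hwz]; omega
  set Z : G → ℝ := fun y => -M * Real.log (2 + (rhoSet H Ω y : ℝ)) with hZdef
  have hsummable : ∀ x : G, ∀ S : Set G, Summable (Set.indicator S (ω x)) := by
    intro x S
    apply summable_of_ne_finset_zero (s := (hlf x).toFinset)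
    intro b hb
    have hb' : ω x b = 0 := by
      by_contra h
      exact hb ((hlf x).mem_toFinset.mpr h)
    exact Set.indicator_apply_eq_zero.mpr fun _ => hb'
  have main : ∀ x, 1 ≤ rhoSet H Ω x →
      graphLap μ ω Z x ≥ -(M * k₀) / (2 + (rhoSet H Ω x : ℝ)) := by
    intro x hx
    set r := rhoSet H Ω x with hr
    set Cp : ℝ := -M * Real.log (2 + ((r + 1 : ℕ) : ℝ)) - (-M * Real.log (2 + (r : ℝ)))
      with hCp
    set Cm : ℝ := -M * Real.log (2 + ((r - 1 : ℕ) : ℝ)) - (-M * Real.log (2 + (r : ℝ)))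
      with hCm
    have hr2 : (0 : ℝ) < 2 + (r : ℝ) := by positivity
    -- pointwise decomposition
    have hpt : ∀ y, ω x y * (Z y - Z x) =
        Set.indicator {z : G | rhoSet H Ω z = r + 1} (ω x) y * Cp +
        Set.indicator {z : G | rhoSet H Ω z = r - 1} (ω x) y * Cm := by
      intro y
      by_cases h0 : ω x y = 0
      · simp [Set.indicator_apply, h0]
      · have hpos : 0 < ω x y := lt_of_le_of_ne (hnn x y) (Ne.symm h0)
        have hadjxy : H.Adj x y := (hadj x y).mpr hpos
        have h1 : rhoSet H Ω x ≤ rhoSet H Ω y + 1 := hstep x y hadjxy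
        have h2 : rhoSet H Ω y ≤ rhoSet H Ω x + 1 := hstep y x hadjxy.symm
        have htri : rhoSet H Ω y = r - 1 ∨ rhoSet H Ω y = r ∨ rhoSet H Ω y = r + 1 := by
          omega
        rcases htri with h | h | h
        · have hnm : y ∉ {z : G | rhoSet H Ω z = r + 1} := by
            simp only [Set.mem_setOf_eq]; omega
          have hmem : y ∈ {z : G | rhoSet H Ω z = r - 1} := h
          rw [Set.indicator_of_notMem hnm, Set.indicator_of_mem hmem]
          simp only [hZdef, h]
          ring
        · have hnm1 : y ∉ {z : G | rhoSet H Ω z = r + 1} := by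
            simp only [Set.mem_setOf_eq]; omega
          have hnm2 : y ∉ {z : G | rhoSet H Ω z = r - 1} := by
            simp only [Set.mem_setOf_eq]; omega
          rw [Set.indicator_of_notMem hnm1, Set.indicator_of_notMem hnm2]
          simp only [hZdef, h]
          ring
        · have hnm : y ∉ {z : G | rhoSet H Ω z = r - 1} := by
            simp only [Set.mem_setOf_eq]; omega
          have hmem : y ∈ {z : G | rhoSet H Ω z = r + 1} := h
          rw [Set.indicator_of_notMem hnm, Set.indicator_of_mem hmem]
          simp only [hZdef, h]
          ring
    have hsum : ∑' y, ω x y * (Z y - Z x) =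
        (∑' y, Set.indicator {z : G | rhoSet H Ω z = r + 1} (ω x) y) * Cp +
        (∑' y, Set.indicator {z : G | rhoSet H Ω z = r - 1} (ω x) y) * Cm := by
      rw [tsum_congr hpt,
        Summable.tsum_add ((hsummable x _).mul_right _) ((hsummable x _).mul_right _),
        tsum_mul_right, tsum_mul_right]
    have hlap : graphLap μ ω Z x = outDeg μ ω H Ω x * Cp + inDeg μ ω H Ω x * Cm := by
      rw [graphLap, hsum, outDeg, inDeg, ← hr]
      ring
    -- bounds on Cp
    have hcast : ((r + 1 : ℕ) : ℝ) = (r : ℝ) + 1 := by push_cast; ring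
    have hlogle : Real.log (2 + ((r + 1 : ℕ) : ℝ)) - Real.log (2 + (r : ℝ)) ≤
        1 / (2 + (r : ℝ)) := by
      rw [hcast, show (2 : ℝ) + ((r : ℝ) + 1) = 2 + (r : ℝ) + 1 from by ring,
        ← Real.log_div (by positivity) (by positivity)]
      have h := Real.log_le_sub_one_of_pos
        (x := (2 + (r : ℝ) + 1) / (2 + (r : ℝ))) (by positivity)
      have heq : (2 + (r : ℝ) + 1) / (2 + (r : ℝ)) - 1 = 1 / (2 + (r : ℝ)) := by
        field_simp
        ring
      linarith
    have hlogge : Real.log (2 + (r : ℝ)) ≤ Real.log (2 + ((r + 1 : ℕ) : ℝ)) := by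
      apply Real.log_le_log (by positivity)
      rw [hcast]; linarith
    have hCp_le0 : Cp ≤ 0 := by
      rw [hCp]; nlinarith
    have hCp_ge : Cp ≥ -(M / (2 + (r : ℝ))) := by
      rw [hCp]
      have : -M * (Real.log (2 + ((r + 1 : ℕ) : ℝ)) - Real.log (2 + (r : ℝ))) ≥
          -M * (1 / (2 + (r : ℝ))) := by
        apply mul_le_mul_of_nonpos_left hlogle (by linarith)
      calc -M * Real.log (2 + ((r + 1 : ℕ) : ℝ)) - -M * Real.log (2 + (r : ℝ))
          = -M * (Real.log (2 + ((r + 1 : ℕ) : ℝ)) - Real.log (2 + (r : ℝ))) := by ring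
        _ ≥ -M * (1 / (2 + (r : ℝ))) := this
        _ = -(M / (2 + (r : ℝ))) := by ring
    -- Cm ≥ 0
    have hCm_ge0 : 0 ≤ Cm := by
      rw [hCm]
      have hcast' : ((r - 1 : ℕ) : ℝ) ≤ (r : ℝ) := by
        exact_mod_cast Nat.cast_le.mpr (Nat.sub_le r 1)
      have : Real.log (2 + ((r - 1 : ℕ) : ℝ)) ≤ Real.log (2 + (r : ℝ)) := by
        apply Real.log_le_log (by positivity)
        linarith
      nlinarith
    -- inDeg ≥ 0
    have hin : 0 ≤ inDeg μ ω H Ω x := by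
      rw [inDeg]
      apply mul_nonneg (one_div_nonneg.mpr (le_of_lt (hμ x)))
      apply tsum_nonneg
      intro y
      exact Set.indicator_nonneg (fun z _ => hnn x z) y
    obtain ⟨hout0, houtk⟩ := hD x hx
    rw [hlap]
    have h1 : k₀ * Cp ≤ outDeg μ ω H Ω x * Cp :=
      mul_le_mul_of_nonpos_right houtk hCp_le0
    have h2 : k₀ * (-(M / (2 + (r : ℝ)))) ≤ k₀ * Cp :=
      mul_le_mul_of_nonneg_left hCp_ge (le_of_lt hk₀)
    have h3 : k₀ * (-(M / (2 + (r : ℝ)))) = -(M * k₀) / (2 + (r : ℝ)) := by ring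
    nlinarith [mul_nonneg hin hCm_ge0]
  refine ⟨main, ?_⟩
  intro V c₀ hc₀ hV hMc x hx
  have h1 := main x hx
  have hr1 : (0 : ℝ) < 1 + (rhoSet H Ω x : ℝ) := by positivity
  have hr2 : (0 : ℝ) < 2 + (rhoSet H Ω x : ℝ) := by positivity
  have hMk : M * k₀ ≤ c₀ := by
    rw [le_div_iff₀ hk₀] at hMc
    exact hMc
  have hdiv : (M * k₀) / (2 + (rhoSet H Ω x : ℝ)) ≤ c₀ / (1 + (rhoSet H Ω x : ℝ)) :=
    div_le_div₀ (le_of_lt hc₀) hMk hr1 (by linarith)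
  have hVx := hV x
  have : c₀ * (1 + (rhoSet H Ω x : ℝ))⁻¹ = c₀ / (1 + (rhoSet H Ω x : ℝ)) := by
    rw [div_eq_mul_inv]
  rw [this] at hVx
  have : -(M * k₀) / (2 + (rhoSet H Ω x : ℝ)) =
      -((M * k₀) / (2 + (rhoSet H Ω x : ℝ))) := by ring
  rw [this] at h1
  linarith
end

section
/- Phragmén–Lindelöf principle on graphs: Let (G, ω, μ) be a connected, locally finite weighted graph with distance d, V ≥ 0 on G, and x₀ ∈ G. Suppose there exists Z : G → ℝ, bounded above, with ΔZ ≥ −V on G and Z(x) → −∞ as d(x,x₀) → +∞. If u satisfies Δu − Vu ≥ 0 on G and limsup_{d(x,x₀)→∞} u(x)/|Z(x)| ≤ 0, then u ≤ 0 on G. -/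
open scoped Classical

/-- Maximum principle on graphs: if `Δf - Vf ≥ 0` and `f ≤ 0` outside a finite set,
then `f ≤ 0`. -/
theorem pl_maxp {G : Type*} [Infinite G] (μ : G → ℝ) (ω : G → G → ℝ) (H : SimpleGraph G)
    (hμ : ∀ x, 0 < μ x) (hnn : ∀ x y, 0 ≤ ω x y) (hadj : ∀ x y, H.Adj x y ↔ 0 < ω x y)
    (hconn : H.Connected) (hlf : ∀ x, (Function.support (ω x)).Finite)
    (V : G → ℝ) (hV : ∀ x, 0 ≤ V x) (B : Set G) (hB : B.Finite)
    (f : G → ℝ) (hf : ∀ x, graphLap μ ω f x - V x * f x ≥ 0)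
    (hout : ∀ y, y ∉ B → f y ≤ 0) : ∀ x, f x ≤ 0 := by
  by_contra hcon
  push_neg at hcon
  obtain ⟨x, hx⟩ := hcon
  have hxB : x ∈ hB.toFinset := by
    simp only [Set.Finite.mem_toFinset]
    by_contra h
    exact absurd (hout x h) (not_le.2 hx)
  obtain ⟨xm, hxmmem, hxmmax⟩ := hB.toFinset.exists_max_image f ⟨x, hxB⟩
  set M := f xm with hM
  have hMpos : 0 < M := lt_of_lt_of_le hx (hxmmax x hxB)
  have hglob : ∀ y, f y ≤ M := by
    intro y
    by_cases hy : y ∈ B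
    · exact hxmmax y (hB.mem_toFinset.2 hy)
    · exact (hout y hy).trans hMpos.le
  have hstep : ∀ y, f y = M → ∀ z, H.Adj y z → f z = M := by
    intro y hy z hz
    have hωpos : 0 < ω y z := (hadj y z).1 hz
    have hlap : graphLap μ ω f y ≥ V y * f y := by linarith [hf y]
    have hVfy : 0 ≤ V y * f y := by
      rw [hy]; exact mul_nonneg (hV y) hMpos.le
    have hμy := hμ y
    set t := (hlf y).toFinset with ht
    have hsum : (∑' w, ω y w * (f w - f y)) = ∑ w ∈ t, ω y w * (f w - f y) := by
      apply tsum_eq_sum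
      intro b hb
      have hb0 : ω y b = 0 := by
        by_contra h
        exact hb ((hlf y).mem_toFinset.2 h)
      rw [hb0]; ring
    have hS : 0 ≤ ∑ w ∈ t, ω y w * (f w - f y) := by
      have h1 : 0 ≤ (1 / μ y) * ∑' w, ω y w * (f w - f y) := le_trans hVfy hlap
      rw [hsum] at h1
      nlinarith [one_div_pos.2 hμy]
    have hterm : ∀ w ∈ t, ω y w * (f w - f y) ≤ 0 := by
      intro w _
      apply mul_nonpos_of_nonneg_of_nonpos (hnn y w)
      rw [hy]; linarith [hglob w]
    have hS0 : ∑ w ∈ t, ω y w * (f w - f y) = 0 :=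
      le_antisymm (Finset.sum_nonpos hterm) hS
    have hzt : z ∈ t := (hlf y).mem_toFinset.2 (ne_of_gt hωpos)
    have h0 := (Finset.sum_eq_zero_iff_of_nonpos hterm).1 hS0 z hzt
    have hfz : f z - f y = 0 := by
      rcases mul_eq_zero.1 h0 with h | h
      · exact absurd h (ne_of_gt hωpos)
      · exact h
    rw [hy] at hfz; linarith
  have hwalk : ∀ a b : G, H.Walk a b → f a = M → f b = M := by
    intro a b w
    induction w with
    | nil => exact fun h => h
    | cons hac p ih => exact fun ha => ih (hstep _ ha _ hac)
  obtain ⟨z, hz⟩ := (hB.infinite_compl).nonempty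
  obtain ⟨w⟩ := hconn.preconnected xm z
  have : f z = M := hwalk xm z w rfl
  have := hout z hz
  linarith

/-- Phragmén–Lindelöf principle on graphs: let `d` be a distance on a
connected, locally finite, infinite weighted graph whose balls `{d(·,x₀) < r}` are finite,
let `V ≥ 0`, and suppose `Z` is bounded above, `ΔZ ≥ -V` on `G`, and `Z(x) → -∞` as
`d(x,x₀) → ∞`. If `Δu - Vu ≥ 0` on `G` and `limsup_{d(x,x₀)→∞} u(x)/|Z(x)| ≤ 0`,
then `u ≤ 0` on `G`. -/
theorem stmt11 {G : Type*} [Infinite G] (μ : G → ℝ) (ω : G → G → ℝ) (H : SimpleGraph G)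
    (hμ : ∀ x, 0 < μ x) (hsym : ∀ x y, ω x y = ω y x) (hdiag : ∀ x, ω x x = 0)
    (hnn : ∀ x y, 0 ≤ ω x y) (hadj : ∀ x y, H.Adj x y ↔ 0 < ω x y)
    (hconn : H.Connected) (hlf : ∀ x, (Function.support (ω x)).Finite)
    (d : G → G → ℝ) (hd0 : ∀ x, d x x = 0) (hdsym : ∀ x y, d x y = d y x)
    (hdtri : ∀ x y z, d x z ≤ d x y + d y z) (hdnn : ∀ x y, 0 ≤ d x y)
    (x₀ : G) (hballs : ∀ r : ℝ, {x : G | d x x₀ < r}.Finite)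
    (V : G → ℝ) (hV : ∀ x, 0 ≤ V x)
    (Z : G → ℝ) (hZbd : ∃ H₀ : ℝ, ∀ x, Z x ≤ H₀)
    (hZsub : ∀ x, graphLap μ ω Z x ≥ -V x)
    (hZinf : ∀ C : ℝ, ∃ R : ℝ, ∀ x, R ≤ d x x₀ → Z x ≤ C)
    (u : G → ℝ) (hu : ∀ x, graphLap μ ω u x - V x * u x ≥ 0)
    (hgrowth : ∀ ε : ℝ, 0 < ε → ∃ R : ℝ, ∀ x, R ≤ d x x₀ → u x ≤ ε * |Z x|) :
    ∀ x, u x ≤ 0 := by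
  obtain ⟨H₀, hH₀⟩ := hZbd
  set K : ℝ := max H₀ 0 + 1 with hK
  have hK0 : 0 < K := by positivity
  have hZK : ∀ x, Z x - K ≤ -1 := by
    intro x
    have := hH₀ x
    have : Z x ≤ max H₀ 0 := this.trans (le_max_left _ _)
    simp only [hK]; linarith
  -- linearity of the Laplacian for w = u + α(Z - K)
  have hlin : ∀ (α : ℝ) (x : G),
      graphLap μ ω (fun y => u y + α * (Z y - K)) x
        = graphLap μ ω u x + α * graphLap μ ω Z x := by
    intro α x
    have ht : ∀ (g : G → ℝ), (∑' y, ω x y * g y) = ∑ y ∈ (hlf x).toFinset, ω x y * g y := by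
      intro g
      apply tsum_eq_sum
      intro b hb
      have hb0 : ω x b = 0 := by
        by_contra h
        exact hb ((hlf x).mem_toFinset.2 h)
      rw [hb0]; ring
    unfold graphLap
    rw [ht fun y => (u y + α * (Z y - K)) - (u x + α * (Z x - K)),
        ht fun y => u y - u x, ht fun y => Z y - Z x]
    have hsplit : ∑ y ∈ (hlf x).toFinset, ω x y * (u y + α * (Z y - K) - (u x + α * (Z x - K)))
        = (∑ y ∈ (hlf x).toFinset, ω x y * (u y - u x))
          + α * ∑ y ∈ (hlf x).toFinset, ω x y * (Z y - Z x) := by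
      rw [Finset.mul_sum, ← Finset.sum_add_distrib]
      apply Finset.sum_congr rfl
      intro y _
      ring
    rw [hsplit]
    ring
  intro x
  have key : ∀ α : ℝ, 0 < α → u x ≤ α * (K - Z x) := by
    intro α hα
    obtain ⟨R₁, hR₁⟩ := hgrowth α hα
    obtain ⟨R₂, hR₂⟩ := hZinf 0
    set R₀ := max R₁ R₂ with hR₀
    set B : Set G := {y | d y x₀ < R₀} with hBdef
    have hB : B.Finite := hballs R₀
    set w : G → ℝ := fun y => u y + α * (Z y - K) with hw
    have hwsub : ∀ y, graphLap μ ω w y - V y * w y ≥ 0 := by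
      intro y
      have h1 := hu y
      have h2 := hZsub y
      have h3 := hZK y
      have h4 := hV y
      have : graphLap μ ω w y = graphLap μ ω u y + α * graphLap μ ω Z y := hlin α y
      rw [hw]
      simp only [this]
      have hVZ : V y * (Z y - K) ≤ -V y := by nlinarith
      nlinarith
    have hwout : ∀ y, y ∉ B → w y ≤ 0 := by
      intro y hy
      simp only [hBdef, Set.mem_setOf_eq, not_lt] at hy
      have hy1 : u y ≤ α * |Z y| := hR₁ y (le_trans (le_max_left _ _) hy)
      have hy2 : Z y ≤ 0 := hR₂ y (le_trans (le_max_right _ _) hy)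
      rw [abs_of_nonpos hy2] at hy1
      simp only [hw]
      nlinarith
    have := pl_maxp μ ω H hμ hnn hadj hconn hlf V hV B hB w hwsub hwout x
    simp only [hw] at this
    nlinarith
  by_contra hpos
  push_neg at hpos
  have hc : 0 < K - Z x := by
    have := hZK x
    linarith
  have := key (u x / (2 * (K - Z x))) (by positivity)
  have heq : u x / (2 * (K - Z x)) * (K - Z x) = u x / 2 := by
    field_simp
  rw [heq] at this
  linarith
end

section
/- On a spherically symmetric tree (G,ω,μ) with root o, branching function b(r) = (r+1)^p (p ≥ 1), unit weights and unit measure, let α ∈ [0,1] with α + p > 1, and V(x) = (1 + ρ(x,o))^{−α}. Then for any β with 0 < β < α + p − 1, the function h(x) = (1 + ρ(x,o))^{−β} satisfies (1/V(x)) Δh(x) ≤ −1 for all x with ρ(x,o) sufficiently large. In particular, Δh ≤ −V outside a finite ball, h > 0, and h(x) → 0 as ρ(x,o) → ∞. -/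
open scoped Classical

open Filter Real

lemma rpow_mvt' (β : ℝ) {a : ℝ} (ha : 0 < a) :
    ∃ c ∈ Set.Ioo a (a+1), (a+1) ^ (-β) - a ^ (-β) = -β * c ^ (-β - 1) := by
  obtain ⟨c, hc, hderiv⟩ := exists_hasDerivAt_eq_slope (fun x => x ^ (-β))
      (fun x => -β * x ^ (-β - 1)) (by linarith : a < a + 1)
      (fun x hx => ((Real.hasDerivAt_rpow_const
        (Or.inl (ne_of_gt (lt_of_lt_of_le ha hx.1)))).continuousAt.continuousWithinAt))
      (fun x hx => Real.hasDerivAt_rpow_const (Or.inl (ne_of_gt (lt_trans ha hx.1))))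
  refine ⟨c, hc, ?_⟩
  rw [hderiv]
  ring

lemma rpow_diff_upper' (β : ℝ) (hβ : 0 < β) {a : ℝ} (ha : 0 < a) :
    (a+1) ^ (-β) - a ^ (-β) ≤ -β * (a+1) ^ (-β - 1) := by
  obtain ⟨c, hc, heq⟩ := rpow_mvt' β ha
  rw [heq]
  have h1 : (a+1) ^ (-β - 1) ≤ c ^ (-β - 1) :=
    Real.rpow_le_rpow_of_nonpos (lt_trans ha hc.1) hc.2.le (by linarith)
  nlinarith

lemma rpow_diff_lower' (β : ℝ) (hβ : 0 < β) {a : ℝ} (ha : 0 < a) :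
    -β * a ^ (-β - 1) ≤ (a+1) ^ (-β) - a ^ (-β) := by
  obtain ⟨c, hc, heq⟩ := rpow_mvt' β ha
  rw [heq]
  have h1 : c ^ (-β - 1) ≤ a ^ (-β - 1) :=
    Real.rpow_le_rpow_of_nonpos ha hc.1.le (by linarith)
  nlinarith

lemma stmt13_main_bound (p α β : ℝ) (hα0 : 0 ≤ α) (hα1 : α ≤ 1)
    (hβ0 : 0 < β) (hβ : β < α + p - 1) :
    ∃ R : ℕ, 1 ≤ R ∧ ∀ r : ℕ, R ≤ r →
      (1 + (r:ℝ)) ^ α * ( ((r:ℝ)+1)^p * (((r:ℝ)+2)^(-β) - ((r:ℝ)+1)^(-β))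
        + ((r:ℝ)^(-β) - ((r:ℝ)+1)^(-β)) ) ≤ -1 := by
  set δ : ℝ := α + p - β - 1 with hδ
  have hδ0 : 0 < δ := by simp [hδ]; linarith
  have htend : Tendsto (fun r : ℕ => -(β * 2 ^ (-(α+p))) * ((r:ℝ)+2) ^ δ + 2*β)
      atTop atBot := by
    have h1 : Tendsto (fun r : ℕ => (r:ℝ)+2) atTop atTop :=
      tendsto_atTop_add_const_right _ 2 tendsto_natCast_atTop_atTop
    have h2 : Tendsto (fun r : ℕ => ((r:ℝ)+2) ^ δ) atTop atTop :=
      (tendsto_rpow_atTop hδ0).comp h1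
    have hcneg : -(β * 2 ^ (-(α+p))) < 0 := by
      have : (0:ℝ) < 2 ^ (-(α+p)) := Real.rpow_pos_of_pos (by norm_num) _
      nlinarith
    exact tendsto_atBot_add_const_right _ _ ((tendsto_const_mul_atBot_of_neg hcneg).mpr h2)
  obtain ⟨R0, hR0⟩ := (htend.eventually_le_atBot (-1)).exists_forall_of_atTop
  refine ⟨max R0 1, le_max_right _ _, fun r hr => ?_⟩
  have hr1 : 1 ≤ r := le_trans (le_max_right _ _) hr
  have hrR0 : R0 ≤ r := le_trans (le_max_left _ _) hr
  set t : ℝ := (r:ℝ) with ht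
  have ht1 : 1 ≤ t := by rw [ht]; exact_mod_cast hr1
  have ht0 : 0 < t := by linarith
  have hu : (t+2)^(-β) - (t+1)^(-β) ≤ -β * (t+2) ^ (-β - 1) := by
    have := rpow_diff_upper' β hβ0 (a := t+1) (by linarith)
    have e : t + 1 + 1 = t + 2 := by ring
    rw [e] at this; exact this
  have hl : t^(-β) - (t+1)^(-β) ≤ β * t ^ (-β - 1) := by
    have := rpow_diff_lower' β hβ0 (a := t) ht0
    nlinarith
  have hb1 : (0:ℝ) < t + 1 := by linarith
  have hbp : (0:ℝ) < (t+1) ^ p := Real.rpow_pos_of_pos hb1 _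
  have hαpos : (0:ℝ) < (1+t) ^ α := Real.rpow_pos_of_pos (by linarith) _
  have step1 : ((t:ℝ)+1)^p * ((t+2)^(-β) - (t+1)^(-β)) + (t^(-β) - (t+1)^(-β))
      ≤ (t+1)^p * (-β * (t+2)^(-β-1)) + β * t^(-β-1) := by
    have := mul_le_mul_of_nonneg_left hu hbp.le
    linarith
  have step2 : (1+t)^α * (((t:ℝ)+1)^p * ((t+2)^(-β) - (t+1)^(-β)) + (t^(-β) - (t+1)^(-β)))
      ≤ (1+t)^α * ((t+1)^p * (-β * (t+2)^(-β-1)) + β * t^(-β-1)) :=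
    mul_le_mul_of_nonneg_left step1 hαpos.le
  have hterm2 : (1+t)^α * t^(-β-1) ≤ 2 := by
    have h2t : (1:ℝ) ≤ 2*t := by linarith
    have e1 : (1+t)^α ≤ (2*t)^α :=
      Real.rpow_le_rpow (by linarith) (by linarith) hα0
    have e2 : (2*t)^α ≤ (2*t)^(1:ℝ) :=
      Real.rpow_le_rpow_of_exponent_le h2t hα1
    rw [Real.rpow_one] at e2
    have e3 : (1+t)^α ≤ 2*t := le_trans e1 e2
    have e4 : (0:ℝ) ≤ t^(-β-1) := (Real.rpow_pos_of_pos ht0 _).le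
    have e5 : (1+t)^α * t^(-β-1) ≤ 2*t * t^(-β-1) :=
      mul_le_mul_of_nonneg_right e3 e4
    have e6 : t * t^(-β-1) = t^(-β) := by
      have e := Real.rpow_add ht0 1 (-β-1)
      rw [Real.rpow_one, show (1 + (-β - 1)) = -β by ring] at e
      exact e.symm
    have e7 : t^(-β) ≤ 1 := Real.rpow_le_one_of_one_le_of_nonpos ht1 (by linarith)
    calc (1+t)^α * t^(-β-1) ≤ 2*t * t^(-β-1) := e5
      _ = 2 * (t * t^(-β-1)) := by ring
      _ = 2 * t^(-β) := by rw [e6]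
      _ ≤ 2 := by linarith
  have hterm1 : 2 ^ (-(α+p)) * (t+2)^δ ≤ (1+t)^α * ((t+1)^p * (t+2)^(-β-1)) := by
    have e0 : (1+t)^α * (t+1)^p = (t+1)^(α+p) := by
      rw [show (1+t) = (t+1) by ring, ← Real.rpow_add hb1]
    have e1 : ((t+2)/2)^(α+p) ≤ (t+1)^(α+p) := by
      apply Real.rpow_le_rpow (by linarith) (by linarith) (by linarith)
    have e2 : ((t+2)/2)^(α+p) = (t+2)^(α+p) * 2^(-(α+p)) := by
      rw [Real.div_rpow (by linarith) (by norm_num), Real.rpow_neg (by norm_num)]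
      ring
    have e3 : (t+2)^(α+p) * (t+2)^(-β-1) = (t+2)^δ := by
      rw [← Real.rpow_add (by linarith)]
      congr 1
      simp [hδ]; ring
    have e4 : (0:ℝ) < (t+2)^(-β-1) := Real.rpow_pos_of_pos (by linarith) _
    calc 2 ^ (-(α+p)) * (t+2)^δ = ((t+2)/2)^(α+p) * (t+2)^(-β-1) := by
          rw [e2, ← e3]; ring
      _ ≤ (t+1)^(α+p) * (t+2)^(-β-1) := mul_le_mul_of_nonneg_right e1 e4.le
      _ = (1+t)^α * ((t+1)^p * (t+2)^(-β-1)) := by rw [← e0]; ring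
  have hcomp := hR0 r hrR0
  calc (1+t)^α * (((t:ℝ)+1)^p * ((t+2)^(-β) - (t+1)^(-β)) + (t^(-β) - (t+1)^(-β)))
      ≤ (1+t)^α * ((t+1)^p * (-β * (t+2)^(-β-1)) + β * t^(-β-1)) := step2
    _ = -β * ((1+t)^α * ((t+1)^p * (t+2)^(-β-1))) + β * ((1+t)^α * t^(-β-1)) := by ring
    _ ≤ -β * (2 ^ (-(α+p)) * (t+2)^δ) + β * 2 := by
        have a1 := mul_le_mul_of_nonpos_left hterm1 (by linarith : -β ≤ 0)
        have a2 := mul_le_mul_of_nonneg_left hterm2 hβ0.le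
        linarith
    _ = -(β * 2 ^ (-(α+p))) * (t+2)^δ + 2*β := by ring
    _ ≤ -1 := hcomp

/-- on a spherically symmetric tree with root `o`, branching function
`b(r) = (r+1)^p` (`p ≥ 1`), unit weights and unit measure, with `α ∈ [0,1]`, `α + p > 1`,
`V(x) = (1+ρ(x,o))^{-α}`: for any `0 < β < α + p - 1`, the function
`h(x) = (1+ρ(x,o))^{-β}` satisfies `(1/V)Δh ≤ -1` (hence `Δh ≤ -V`) for `ρ(x,o)` large;
moreover `h > 0` and `h(x) → 0` as `ρ(x,o) → ∞`. -/
theorem stmt13 {G : Type*} (μ : G → ℝ) (ω : G → G → ℝ) (H : SimpleGraph G)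
    (hμ : ∀ x, μ x = 1) (hsym : ∀ x y, ω x y = ω y x) (hdiag : ∀ x, ω x x = 0)
    (hnn : ∀ x y, 0 ≤ ω x y) (hadj : ∀ x y, H.Adj x y ↔ 0 < ω x y)
    (hconn : H.Connected) (hlf : ∀ x, (Function.support (ω x)).Finite)
    (o : G) (hω01 : ∀ a b, ω a b = 0 ∨ ω a b = 1)
    (hsph : ∀ a b, H.dist a o = H.dist b o → ω a b = 0)
    (p α β : ℝ) (hp : 1 ≤ p) (hα0 : 0 ≤ α) (hα1 : α ≤ 1) (hαp : 1 < α + p)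
    (hout : ∀ x, 1 ≤ H.dist x o →
      outDeg μ ω H {o} x = ((H.dist x o : ℝ) + 1) ^ p)
    (hin : ∀ x, 1 ≤ H.dist x o → inDeg μ ω H {o} x = 1)
    (V h : G → ℝ)
    (hVdef : ∀ x, V x = (1 + (H.dist x o : ℝ)) ^ (-α))
    (hhdef : ∀ x, h x = (1 + (H.dist x o : ℝ)) ^ (-β))
    (hβ0 : 0 < β) (hβ : β < α + p - 1) :
    (∃ R : ℕ, ∀ x, R ≤ H.dist x o →
      (1 / V x) * graphLap μ ω h x ≤ -1 ∧ graphLap μ ω h x ≤ -V x) ∧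
    (∀ x, 0 < h x) ∧
    (∀ ε : ℝ, 0 < ε → ∃ R : ℕ, ∀ x, R ≤ H.dist x o → h x ≤ ε) := by
  have hrho : ∀ z, rhoSet H {o} z = H.dist z o := by
    intro z
    simp [rhoSet]
  have hVpos : ∀ x, 0 < V x := fun x => by
    rw [hVdef]; exact Real.rpow_pos_of_pos (by positivity) _
  have hhpos : ∀ x, 0 < h x := fun x => by
    rw [hhdef]; exact Real.rpow_pos_of_pos (by positivity) _
  -- Laplacian formula for r ≥ 1
  have hlap : ∀ x, 1 ≤ H.dist x o → graphLap μ ω h x =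
      ((H.dist x o : ℝ)+1)^p * (((H.dist x o : ℝ)+2)^(-β) - ((H.dist x o : ℝ)+1)^(-β))
      + (((H.dist x o : ℝ))^(-β) - ((H.dist x o : ℝ)+1)^(-β)) := by
    intro x hx
    set r := H.dist x o with hr
    set t : ℝ := (r:ℝ) with htdef
    set c₁ : ℝ := (t+2)^(-β) - (t+1)^(-β) with hc₁
    set c₂ : ℝ := t^(-β) - (t+1)^(-β) with hc₂
    set A : Set G := {z | H.dist z o = r + 1} with hA
    set B : Set G := {z | H.dist z o = r - 1} with hB
    have hsummInd : ∀ s : Set G, Summable (s.indicator (ω x)) := by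
      intro s
      apply summable_of_ne_finset_zero (s := (hlf x).toFinset)
      intro y hy
      have h0 : ω x y = 0 := by
        by_contra hne
        exact hy ((hlf x).mem_toFinset.mpr hne)
      simp [Set.indicator_apply, h0]
    have hxval : h x = (t+1)^(-β) := by
      rw [hhdef x, ← hr, show (1 + t) = t + 1 by ring]
    have key : ∀ y, ω x y * (h y - h x)
        = c₁ * A.indicator (ω x) y + c₂ * B.indicator (ω x) y := by
      intro y
      rcases hω01 x y with h0 | h1
      · simp [h0, Set.indicator_apply]
      · have hadj' : H.Adj x y := (hadj x y).mpr (by rw [h1]; norm_num)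
        have hd1 : H.dist y x = 1 := SimpleGraph.dist_eq_one_iff_adj.mpr hadj'.symm
        have hd1' : H.dist x y = 1 := SimpleGraph.dist_eq_one_iff_adj.mpr hadj'
        have htri1 : H.dist y o ≤ H.dist y x + H.dist x o := hconn.dist_triangle
        have htri2 : H.dist x o ≤ H.dist x y + H.dist y o := hconn.dist_triangle
        have hne : H.dist y o ≠ H.dist x o := by
          intro he
          have := hsph x y he.symm
          rw [h1] at this; norm_num at this
        rcases (by omega : H.dist y o = r + 1 ∨ H.dist y o = r - 1) with hd | hd
        · have hyA : y ∈ A := hd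
          have hyB : y ∉ B := by
            simp only [hB, Set.mem_setOf_eq, hd]
            omega
          have hyval : h y = (t+2)^(-β) := by
            rw [hhdef y, hd]
            push_cast
            rw [show (1 + (t + 1)) = t + 2 by ring]
          rw [Set.indicator_of_mem hyA, Set.indicator_of_notMem hyB,
            hyval, hxval, h1, hc₁]
          ring
        · have hyB : y ∈ B := hd
          have hyA : y ∉ A := by
            simp only [hA, Set.mem_setOf_eq, hd]
            omega
          have hyval : h y = t^(-β) := by
            rw [hhdef y, hd]
            have : (1 : ℝ) + ((r - 1 : ℕ) : ℝ) = t := by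
              rw [htdef]
              have : ((r - 1 : ℕ) : ℝ) = (r : ℝ) - 1 := by
                push_cast [Nat.cast_sub hx]
                ring
              rw [this]; ring
            rw [this]
          rw [Set.indicator_of_mem hyB, Set.indicator_of_notMem hyA,
            hyval, hxval, h1, hc₂]
          ring
    have houtval : (∑' y, A.indicator (ω x) y) = (t+1)^p := by
      have hsetA : {z : G | rhoSet H {o} z = rhoSet H {o} x + 1} = A := by
        ext z; simp [hrho, hA, hr]
      have := hout x hx
      rw [outDeg, hsetA, hμ x] at this
      simpa using this
    have hinval : (∑' y, B.indicator (ω x) y) = 1 := by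
      have hsetB : {z : G | rhoSet H {o} z = rhoSet H {o} x - 1} = B := by
        ext z; simp [hrho, hB, hr]
      have := hin x hx
      rw [inDeg, hsetB, hμ x] at this
      simpa using this
    calc graphLap μ ω h x = ∑' y, ω x y * (h y - h x) := by
          rw [graphLap, hμ x]; norm_num
      _ = ∑' y, (c₁ * A.indicator (ω x) y + c₂ * B.indicator (ω x) y) :=
          tsum_congr key
      _ = (∑' y, c₁ * A.indicator (ω x) y) + ∑' y, c₂ * B.indicator (ω x) y :=
          Summable.tsum_add ((hsummInd A).mul_left c₁) ((hsummInd B).mul_left c₂)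
      _ = c₁ * (∑' y, A.indicator (ω x) y) + c₂ * (∑' y, B.indicator (ω x) y) := by
          rw [tsum_mul_left, tsum_mul_left]
      _ = (t+1)^p * ((t+2)^(-β) - (t+1)^(-β)) + (t^(-β) - (t+1)^(-β)) := by
          rw [houtval, hinval, hc₁, hc₂]; ring
  obtain ⟨R, hR1, hRb⟩ := stmt13_main_bound p α β hα0 hα1 hβ0 hβ
  refine ⟨⟨R, fun x hx => ?_⟩, hhpos, fun ε hε => ?_⟩
  · have hx1 : 1 ≤ H.dist x o := le_trans hR1 hx
    have hVinv : 1 / V x = (1 + (H.dist x o : ℝ)) ^ α := by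
      rw [hVdef, one_div, Real.rpow_neg (by positivity), inv_inv]
    have h1 : (1 / V x) * graphLap μ ω h x ≤ -1 := by
      rw [hVinv, hlap x hx1]
      exact hRb _ hx
    refine ⟨h1, ?_⟩
    have hV := hVpos x
    have e : V x * (1 / V x * graphLap μ ω h x) = graphLap μ ω h x := by
      field_simp
    have := mul_le_mul_of_nonneg_left h1 hV.le
    rw [e] at this
    linarith
  · have htend0 : Tendsto (fun n : ℕ => (1 + (n:ℝ))^(-β)) atTop (nhds 0) :=
      (tendsto_rpow_neg_atTop hβ0).comp
        (tendsto_atTop_add_const_left _ 1 tendsto_natCast_atTop_atTop)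
    obtain ⟨R, hR⟩ := (htend0.eventually_le_const hε).exists_forall_of_atTop
    exact ⟨R, fun x hx => by rw [hhdef x]; exact hR _ hx⟩
end

section
/- Let (G, ω, μ) be a connected, locally finite weighted graph, V > 0 on G, and suppose h : G → ℝ is a supersolution of Δh = −V on G∖B (B a finite set), with h > 0 on G∖B and h(x) → 0 as x → ∞. Suppose further (following the comparison construction) that for each γ > 0 there exist bounded solutions to Δu − Vu = 0 on exhausting finite domains with boundary value γ. Then there exists a bounded solution u of Δu − Vu = 0 on G with u(x) → γ as x → ∞; in particular there are infinitely many bounded solutions of Δu − Vu = 0. -/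
open scoped Classical

section aux
variable {G : Type*} (μ : G → ℝ) (ω : G → G → ℝ)

lemma lap_eq (hlf : ∀ x, (Function.support (ω x)).Finite) (f : G → ℝ) (x : G) :
    graphLap μ ω f x = (1 / μ x) * ∑ y ∈ (hlf x).toFinset, ω x y * (f y - f x) := by
  unfold graphLap
  congr 1
  refine tsum_eq_sum ?_
  intro b hb
  have h0 : ω x b = 0 := by
    by_contra hc
    exact hb ((hlf x).mem_toFinset.mpr hc)
  simp [h0]

lemma lap_nonneg_of (hμ : ∀ x, 0 < μ x) (hnn : ∀ x y, 0 ≤ ω x y)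
    (hlf : ∀ x, (Function.support (ω x)).Finite) (f : G → ℝ) (x : G)
    (hf : ∀ y, ω x y ≠ 0 → f x ≤ f y) : 0 ≤ graphLap μ ω f x := by
  rw [lap_eq μ ω hlf]
  refine mul_nonneg (one_div_nonneg.mpr (hμ x).le) (Finset.sum_nonneg fun y _ => ?_)
  rcases eq_or_ne (ω x y) 0 with h0 | h0
  · simp [h0]
  · exact mul_nonneg (hnn x y) (sub_nonneg.mpr (hf y h0))

lemma lap_nonpos_of (hμ : ∀ x, 0 < μ x) (hnn : ∀ x y, 0 ≤ ω x y)
    (hlf : ∀ x, (Function.support (ω x)).Finite) (f : G → ℝ) (x : G)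
    (hf : ∀ y, ω x y ≠ 0 → f y ≤ f x) : graphLap μ ω f x ≤ 0 := by
  rw [lap_eq μ ω hlf]
  refine mul_nonpos_iff.mpr (Or.inl ⟨one_div_nonneg.mpr (hμ x).le,
    Finset.sum_nonpos fun y _ => ?_⟩)
  rcases eq_or_ne (ω x y) 0 with h0 | h0
  · simp [h0]
  · exact mul_nonpos_iff.mpr (Or.inl ⟨hnn x y, sub_nonpos.mpr (hf y h0)⟩)

lemma lap_comb (hlf : ∀ x, (Function.support (ω x)).Finite) (f g : G → ℝ) (a k : ℝ) (x : G) :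
    graphLap μ ω (fun z => a * f z + g z + k) x
      = a * graphLap μ ω f x + graphLap μ ω g x := by
  rw [lap_eq μ ω hlf, lap_eq μ ω hlf, lap_eq μ ω hlf]
  have hterm : ∀ y ∈ (hlf x).toFinset, ω x y * ((a * f y + g y + k) - (a * f x + g x + k))
      = a * (ω x y * (f y - f x)) + ω x y * (g y - g x) := fun y _ => by ring
  rw [Finset.sum_congr rfl hterm, Finset.sum_add_distrib, ← Finset.mul_sum]
  ring

lemma maxprin (hμ : ∀ x, 0 < μ x) (hnn : ∀ x y, 0 ≤ ω x y)
    (hlf : ∀ x, (Function.support (ω x)).Finite) (V : G → ℝ) (hV : ∀ x, 0 < V x)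
    (γ : ℝ) (hγ : 0 < γ) (D : Finset G) (u : G → ℝ)
    (h1 : ∀ x ∈ D, graphLap μ ω u x - V x * u x = 0)
    (h2 : ∀ x, x ∉ D → u x = γ) : ∀ x, 0 ≤ u x ∧ u x ≤ γ := by
  have hub : ∀ x, u x ≤ γ := by
    by_contra hco
    push_neg at hco
    obtain ⟨x, hx⟩ := hco
    have hxD : x ∈ D := by
      by_contra hxD
      rw [h2 x hxD] at hx; exact lt_irrefl _ hx
    obtain ⟨x₀, hx₀D, hmax⟩ := D.exists_max_image u ⟨x, hxD⟩
    have hx₀γ : γ < u x₀ := lt_of_lt_of_le hx (hmax x hxD)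
    have hglob : ∀ y, ω x₀ y ≠ 0 → u y ≤ u x₀ := by
      intro y _
      by_cases hyD : y ∈ D
      · exact hmax y hyD
      · rw [h2 y hyD]; exact hx₀γ.le
    have hle := lap_nonpos_of μ ω hμ hnn hlf u x₀ hglob
    have heq := h1 x₀ hx₀D
    have := mul_pos (hV x₀) (hγ.trans hx₀γ)
    linarith
  have hlb : ∀ x, 0 ≤ u x := by
    by_contra hco
    push_neg at hco
    obtain ⟨x, hx⟩ := hco
    have hxD : x ∈ D := by
      by_contra hxD
      rw [h2 x hxD] at hx; linarith
    obtain ⟨x₀, hx₀D, hmin⟩ := D.exists_min_image u ⟨x, hxD⟩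
    have hx₀0 : u x₀ < 0 := lt_of_le_of_lt (hmin x hxD) hx
    have hglob : ∀ y, ω x₀ y ≠ 0 → u x₀ ≤ u y := by
      intro y _
      by_cases hyD : y ∈ D
      · exact hmin y hyD
      · rw [h2 y hyD]; linarith
    have hge := lap_nonneg_of μ ω hμ hnn hlf u x₀ hglob
    have heq := h1 x₀ hx₀D
    have := mul_neg_of_pos_of_neg (hV x₀) hx₀0
    linarith
  exact fun x => ⟨hlb x, hub x⟩

end aux

/-- nonuniqueness criterion: on a connected, locally finite, infinite
weighted graph with `V > 0`, suppose `h` is a supersolution of `Δh = -V` outside a finite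
set `B`, positive there, with `h(x) → 0` as `x → ∞` (cofinite filter), and suppose the
Dirichlet problems `Δu - Vu = 0` in `D`, `u = γ` outside `D` admit bounded solutions for
all finite `D`. Then for every `γ > 0` there is a bounded solution `u` of `Δu - Vu = 0`
on `G` with `u(x) → γ` at infinity; in particular there are infinitely many bounded
solutions. -/
theorem stmt16 {G : Type*} [Infinite G] (μ : G → ℝ) (ω : G → G → ℝ) (H : SimpleGraph G)
    (hμ : ∀ x, 0 < μ x) (hsym : ∀ x y, ω x y = ω y x) (hdiag : ∀ x, ω x x = 0)
    (hnn : ∀ x y, 0 ≤ ω x y) (hadj : ∀ x y, H.Adj x y ↔ 0 < ω x y)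
    (hconn : H.Connected) (hlf : ∀ x, (Function.support (ω x)).Finite)
    (V : G → ℝ) (hV : ∀ x, 0 < V x) (B : Finset G) (h : G → ℝ)
    (hsuper : ∀ x, x ∉ B → graphLap μ ω h x ≤ -V x)
    (hpos : ∀ x, x ∉ B → 0 < h x)
    (hto0 : Filter.Tendsto h Filter.cofinite (nhds 0))
    (hdir : ∀ γ : ℝ, ∀ D : Finset G, ∃ u : G → ℝ,
      (∀ x ∈ D, graphLap μ ω u x - V x * u x = 0) ∧ (∀ x, x ∉ D → u x = γ) ∧
      (∃ C : ℝ, ∀ x, |u x| ≤ C)) :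
    (∀ γ : ℝ, 0 < γ → ∃ u : G → ℝ,
      (∀ x, graphLap μ ω u x - V x * u x = 0) ∧ (∃ C : ℝ, ∀ x, |u x| ≤ C) ∧
      Filter.Tendsto u Filter.cofinite (nhds γ)) ∧
    {u : G → ℝ | (∀ x, graphLap μ ω u x - V x * u x = 0) ∧
      ∃ C : ℝ, ∀ x, |u x| ≤ C}.Infinite := by
  haveI := Classical.decEq G
  have main : ∀ γ : ℝ, 0 < γ → ∃ u : G → ℝ,
      (∀ x, graphLap μ ω u x - V x * u x = 0) ∧ (∃ C : ℝ, ∀ x, |u x| ≤ C) ∧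
      Filter.Tendsto u Filter.cofinite (nhds γ) := by
    intro γ hγ
    choose uD hD1 hD2 _hD3 using hdir γ
    have hmp : ∀ D : Finset G, ∀ x, 0 ≤ uD D x ∧ uD D x ≤ γ := fun D =>
      maxprin μ ω hμ hnn hlf V hV γ hγ D (uD D) (hD1 D) (hD2 D)
    -- the enlarged finite set
    set NB : Finset G := B.biUnion (fun b => (hlf b).toFinset) with hNBdef
    set A : Finset G := B ∪ NB with hAdef
    have hBA : ∀ x, x ∉ A → x ∉ B := fun x hx hxB => hx (Finset.mem_union_left _ hxB)
    -- choose the comparison constant c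
    have hcex : ∃ c : ℝ, γ < c ∧ ∀ y ∈ NB \ B, γ ≤ c * h y := by
      rcases (NB \ B).eq_empty_or_nonempty with he | hne
      · exact ⟨γ + 1, by linarith, by simp [he]⟩
      · obtain ⟨m, hmmem, hmmin⟩ := (NB \ B).exists_min_image h hne
        have hm : 0 < h m := hpos m (Finset.mem_sdiff.mp hmmem).2
        refine ⟨max (γ + 1) (γ / h m), lt_of_lt_of_le (by linarith) (le_max_left _ _), ?_⟩
        intro y hy
        have hy0 : h m ≤ h y := hmmin y hy
        calc γ = γ / h m * h m := by field_simp
        _ ≤ max (γ + 1) (γ / h m) * h y :=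
            mul_le_mul (le_max_right _ _) hy0 hm.le
              (le_trans (by positivity) (le_max_right _ _))
    obtain ⟨c, hcγ, hcN⟩ := hcex
    have hc0 : 0 < c := hγ.trans hcγ
    -- comparison: γ - c h ≤ u_D outside A
    have hcomp : ∀ D : Finset G, ∀ x, x ∉ A → γ - c * h x ≤ uD D x := by
      intro D x hxA
      set φ : G → ℝ := fun z => c * h z + uD D z + (-γ) with hφdef
      have hφ_nonneg : ∀ z ∈ D \ A, 0 ≤ φ z := by
        by_contra hco
        push_neg at hco
        obtain ⟨z, hzS, hz⟩ := hco
        obtain ⟨x₀, hx₀S, hmin⟩ := (D \ A).exists_min_image φ ⟨z, hzS⟩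
        have hx₀neg : φ x₀ < 0 := lt_of_le_of_lt (hmin z hzS) hz
        have hx₀A : x₀ ∉ A := (Finset.mem_sdiff.mp hx₀S).2
        have hx₀D : x₀ ∈ D := (Finset.mem_sdiff.mp hx₀S).1
        have hnb : ∀ y, ω x₀ y ≠ 0 → φ x₀ ≤ φ y := by
          intro y hωy
          have hyB : y ∉ B := by
            intro hyB
            apply hx₀A
            refine Finset.mem_union_right _ (Finset.mem_biUnion.mpr ⟨y, hyB, ?_⟩)
            refine (hlf y).mem_toFinset.mpr ?_
            simpa [Function.mem_support, ← hsym x₀ y] using hωy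
          by_cases hyS : y ∈ D \ A
          · exact hmin y hyS
          · have hy0u : 0 ≤ uD D y := (hmp D y).1
            have hyh : 0 < h y := hpos y hyB
            by_cases hyA : y ∈ A
            · have hyNB : y ∈ NB \ B := by
                rcases Finset.mem_union.mp hyA with hB | hNB
                · exact absurd hB hyB
                · exact Finset.mem_sdiff.mpr ⟨hNB, hyB⟩
              have := hcN y hyNB
              have : 0 ≤ φ y := by simp only [hφdef]; linarith
              linarith
            · have hyD : y ∉ D := fun hyD => hyS (Finset.mem_sdiff.mpr ⟨hyD, hyA⟩)
              have huy : uD D y = γ := hD2 D y hyD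
              have : 0 ≤ φ y := by
                simp only [hφdef, huy]
                nlinarith
              linarith
        have hge := lap_nonneg_of μ ω hμ hnn hlf φ x₀ hnb
        have hcombo := lap_comb μ ω hlf h (uD D) c (-γ) x₀
        have hlap : graphLap μ ω φ x₀ = c * graphLap μ ω h x₀ + graphLap μ ω (uD D) x₀ := hcombo
        have hsup := hsuper x₀ (hBA x₀ hx₀A)
        have hequ := hD1 D x₀ hx₀D
        have hub : uD D x₀ ≤ γ := (hmp D x₀).2
        have h1 : c * graphLap μ ω h x₀ ≤ c * (-V x₀) :=
          mul_le_mul_of_nonneg_left hsup hc0.le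
        have h2 : V x₀ * uD D x₀ ≤ V x₀ * γ := mul_le_mul_of_nonneg_left hub (hV x₀).le
        nlinarith [hV x₀]
      by_cases hxD : x ∈ D
      · have := hφ_nonneg x (Finset.mem_sdiff.mpr ⟨hxD, hxA⟩)
        simp only [hφdef] at this
        linarith
      · rw [hD2 D x hxD]
        have hxh : 0 < h x := hpos x (hBA x hxA)
        nlinarith
    -- ultrafilter limit
    haveI : Nonempty (Finset G) := ⟨∅⟩
    let F : Ultrafilter (Finset G) := Ultrafilter.of Filter.atTop
    have hFle : (F : Filter (Finset G)) ≤ Filter.atTop := Ultrafilter.of_le _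
    have key : ∀ x : G, ∃ a : ℝ, a ∈ Set.Icc (0:ℝ) γ ∧
        Filter.Tendsto (fun D => uD D x) ↑F (nhds a) := by
      intro x
      have hle : (F.map (fun D => uD D x) : Filter ℝ) ≤ Filter.principal (Set.Icc 0 γ) := by
        refine Filter.le_principal_iff.mpr (Filter.mem_map.mpr (Filter.univ_mem' ?_))
        intro D
        exact ⟨(hmp D x).1, (hmp D x).2⟩
      obtain ⟨a, haI, hafl⟩ := isCompact_Icc.ultrafilter_le_nhds (F.map (fun D => uD D x)) hle
      rw [Ultrafilter.coe_map] at hafl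
      exact ⟨a, haI, hafl⟩
    choose u huI huT using key
    refine ⟨u, ?_, ⟨γ, fun x => abs_le.mpr ⟨by linarith [(huI x).1], (huI x).2⟩⟩, ?_⟩
    · intro x
      have h1 : Filter.Tendsto
          (fun D => (1 / μ x) * ∑ y ∈ (hlf x).toFinset, ω x y * (uD D y - uD D x)
            - V x * uD D x) ↑F
          (nhds ((1 / μ x) * ∑ y ∈ (hlf x).toFinset, ω x y * (u y - u x) - V x * u x)) := by
        refine Filter.Tendsto.sub ?_ ((huT x).const_mul (V x))
        exact (tendsto_finset_sum _ (fun y _ => ((huT y).sub (huT x)).const_mul (ω x y))).const_mul _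
      have hT : Filter.Tendsto (fun D => graphLap μ ω (uD D) x - V x * uD D x) ↑F
          (nhds (graphLap μ ω u x - V x * u x)) := by
        simpa only [lap_eq μ ω hlf] using h1
      have hev : (fun D => graphLap μ ω (uD D) x - V x * uD D x) =ᶠ[↑F] (fun _ => (0:ℝ)) := by
        apply Filter.Eventually.filter_mono hFle
        filter_upwards [Filter.eventually_ge_atTop ({x} : Finset G)] with D hD
        exact sub_eq_zero.mpr (sub_eq_zero.mp (hD1 D x (hD (Finset.mem_singleton_self x)))) 
      have h0 : Filter.Tendsto (fun D => graphLap μ ω (uD D) x - V x * uD D x) ↑F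
          (nhds 0) := (Filter.tendsto_congr' hev).mpr tendsto_const_nhds
      exact tendsto_nhds_unique hT h0
    · have hg : Filter.Tendsto (fun x => γ - c * h x) Filter.cofinite (nhds γ) := by
        simpa using tendsto_const_nhds.sub (hto0.const_mul c)
      refine tendsto_of_tendsto_of_tendsto_of_le_of_le' hg tendsto_const_nhds ?_ ?_
      · refine Filter.eventually_cofinite.mpr (Set.Finite.subset A.finite_toSet ?_)
        intro x hx
        by_contra hxA
        exact hx (ge_of_tendsto' (huT x) (fun D => hcomp D x hxA))
      · exact Filter.Eventually.of_forall fun x => (huI x).2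
  refine ⟨main, ?_⟩
  choose sol hsol1 hsol2 hsol3 using fun n : ℕ => main ((n : ℝ) + 1) (by positivity)
  refine Set.infinite_of_injective_forall_mem (f := sol) ?_ (fun n => ⟨hsol1 n, hsol2 n⟩)
  intro n m hnm
  have h1 := hsol3 n
  have h2 := hsol3 m
  rw [hnm] at h1
  have h3 := tendsto_nhds_unique h1 h2
  have h4 : (n : ℝ) = m := by linarith
  exact_mod_cast h4
end

section
/- On ℤⁿ with n ≥ 3, let V : ℤⁿ → ℝ with 0 < V(x) ≤ c₀(1+|x|)^{−α} for some α > 2. Then there exist σ > 0, K > 0, γ > 0 with 0 < γ < (n−2)/2 and γ ≤ (α−2)/2 such that h(x) := σ(K + |x|²)^{−γ} satisfies (1/V(x)) Δh(x) ≤ −1 for every x ∈ ℤⁿ with |x| ≥ 1. -/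
open scoped Classical

open Real

/-- First-order Lipschitz upper bound: for `p ≥ 1`, `0 < a ≤ b`,
`a^(-p) - b^(-p) ≤ p * a^(-p-1) * (b-a)`. -/
lemma lip_upper {p a b : ℝ} (hp : 1 ≤ p) (ha : 0 < a) (hab : a ≤ b) :
    a ^ (-p) - b ^ (-p) ≤ p * a ^ (-p - 1) * (b - a) := by
  have hb : 0 < b := ha.trans_le hab
  set s : ℝ := (b - a) / a with hsdef
  have hs0 : 0 ≤ s := div_nonneg (by linarith) ha.le
  have hbs : b = a * (1 + s) := by rw [hsdef]; field_simp <;> ring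
  have h1s : (0:ℝ) < 1 + s := by linarith
  have hinv : (0:ℝ) < (1 + s)⁻¹ := by positivity
  have hu : (-1:ℝ) ≤ (1 + s)⁻¹ - 1 := by linarith
  have hbern := one_add_mul_self_le_rpow_one_add hu hp
  rw [add_sub_cancel] at hbern
  rw [Real.inv_rpow h1s.le, ← Real.rpow_neg h1s.le] at hbern
  have hid : (1 + s) * (1 + s)⁻¹ = 1 := mul_inv_cancel₀ h1s.ne'
  have h3 : 1 - s ≤ (1 + s)⁻¹ := by
    nlinarith [mul_nonneg (mul_nonneg hs0 hs0) hinv.le]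
  have hkey : 1 - p * s ≤ (1 + s) ^ (-p) := by nlinarith
  have hA : (0:ℝ) < a ^ (-p) := Real.rpow_pos_of_pos ha _
  have hbp : b ^ (-p) = a ^ (-p) * (1 + s) ^ (-p) := by
    rw [hbs, Real.mul_rpow ha.le h1s.le]
  have hap1 : a ^ (-p - 1) = a ^ (-p) * a⁻¹ := by
    rw [show (-p - 1 : ℝ) = (-p) + (-1) by ring, Real.rpow_add ha, Real.rpow_neg_one]
  have hba : b - a = a * s := by
    rw [hsdef]; field_simp <;> ring
  rw [hbp, hap1, hba]
  have hia : a⁻¹ * a = 1 := inv_mul_cancel₀ ha.ne'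
  have h5 : a ^ (-p) * (1 - p * s) ≤ a ^ (-p) * (1 + s) ^ (-p) :=
    mul_le_mul_of_nonneg_left hkey hA.le
  calc a ^ (-p) - a ^ (-p) * (1 + s) ^ (-p) ≤ a ^ (-p) - a ^ (-p) * (1 - p * s) := by linarith
    _ = p * (a ^ (-p) * a⁻¹) * (a * s) := by
        have : a⁻¹ * a = 1 := hia
        field_simp
        ring

open Real

/-- Tangent-line lower bound at `b`: for `0 < q ≤ 1`, `0 < a ≤ b`,
`q * b^(-q-1) * (b-a) ≤ a^(-q) - b^(-q)`. -/
lemma tangent_lower {q a b : ℝ} (hq : 0 < q) (hq1 : q ≤ 1) (ha : 0 < a) (hab : a ≤ b) :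
    q * b ^ (-q - 1) * (b - a) ≤ a ^ (-q) - b ^ (-q) := by
  have hb : 0 < b := ha.trans_le hab
  set s : ℝ := (b - a) / b with hsdef
  have hs0 : 0 ≤ s := div_nonneg (by linarith) hb.le
  have hs1 : s < 1 := by
    rw [hsdef, div_lt_one hb]; linarith
  have has : a = b * (1 - s) := by rw [hsdef]; field_simp <;> ring
  have h1s : (0:ℝ) < 1 - s := by linarith
  have hu : (-1:ℝ) ≤ -s := by linarith
  have hbern := rpow_one_add_le_one_add_mul_self hu hq.le hq1
  rw [show (1 + -s : ℝ) = 1 - s by ring] at hbern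
  have hqs : 0 < 1 - q * s := by nlinarith
  have hpos : (0:ℝ) < (1 - s) ^ q := Real.rpow_pos_of_pos h1s _
  have h6 : (1 + q * s) * ((1 - s) ^ q) ≤ 1 := by
    nlinarith [mul_le_mul_of_nonneg_left hbern (show (0:ℝ) ≤ 1 + q * s by positivity),
      mul_nonneg (mul_nonneg (mul_nonneg hq.le hq.le) hs0) hs0]
  have hkey : 1 + q * s ≤ (1 - s) ^ (-q) := by
    rw [Real.rpow_neg h1s.le]
    calc 1 + q * s = (1 + q * s) * ((1 - s) ^ q) * ((1 - s) ^ q)⁻¹ := by field_simp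
      _ ≤ 1 * ((1 - s) ^ q)⁻¹ := mul_le_mul_of_nonneg_right h6 (inv_nonneg.mpr hpos.le)
      _ = ((1 - s) ^ q)⁻¹ := one_mul _
  -- assemble
  have hB : (0:ℝ) < b ^ (-q) := Real.rpow_pos_of_pos hb _
  have hapq : a ^ (-q) = b ^ (-q) * (1 - s) ^ (-q) := by
    rw [has, Real.mul_rpow hb.le h1s.le]
  have hbq1 : b ^ (-q - 1) = b ^ (-q) * b⁻¹ := by
    rw [show (-q - 1 : ℝ) = (-q) + (-1) by ring, Real.rpow_add hb, Real.rpow_neg_one]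
  have hba : b - a = b * s := by rw [hsdef]; field_simp <;> ring
  rw [hapq, hbq1, hba]
  have hib : b⁻¹ * b = 1 := inv_mul_cancel₀ hb.ne'
  have h5 : b ^ (-q) * (1 + q * s) ≤ b ^ (-q) * (1 - s) ^ (-q) :=
    mul_le_mul_of_nonneg_left hkey hB.le
  calc q * (b ^ (-q) * b⁻¹) * (b * s) = b ^ (-q) * (1 + q * s) - b ^ (-q) := by
        field_simp; ring
    _ ≤ b ^ (-q) * (1 - s) ^ (-q) - b ^ (-q) := by linarith

/-- Second-order Taylor upper bound for `t ↦ (x+t)^(-q)` around `t = 0`,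
with second derivative majorized on the segment by its value at level `m`. -/
lemma taylor2 {q x h m : ℝ} (hq : 0 < q) (hm : 0 < m) (hmx : m ≤ x) (hmxh : m ≤ x + h) :
    (x + h) ^ (-q) ≤ x ^ (-q) - q * x ^ (-q - 1) * h
      + q * (q + 1) / 2 * m ^ (-q - 2) * h ^ 2 := by
  have hx : 0 < x := lt_of_lt_of_le hm hmx
  set C : ℝ := q * (q + 1) / 2 * m ^ (-q - 2) with hC
  set φ : ℝ → ℝ := fun t => x ^ (-q) - q * x ^ (-q - 1) * t + C * t ^ 2 - (x + t) ^ (-q)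
    with hφ
  have hφ0 : φ 0 = 0 := by simp [hφ]
  have hder : ∀ t : ℝ, 0 < x + t →
      HasDerivAt φ (-(q * x ^ (-q - 1)) + C * (2 * t) + q * (x + t) ^ (-q - 1)) t := by
    intro t ht
    have h1 : HasDerivAt (fun t : ℝ => x + t) 1 t := (hasDerivAt_id t).const_add x
    have h2 : HasDerivAt (fun t : ℝ => (x + t) ^ (-q)) (1 * (-q) * (x + t) ^ (-q - 1)) t := by
      have := h1.rpow_const (p := -q) (Or.inl ht.ne')
      convert this using 1 <;> ring_nf
    have h3 : HasDerivAt (fun t : ℝ => x ^ (-q) - q * x ^ (-q - 1) * t + C * t ^ 2)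
        (-(q * x ^ (-q - 1)) + C * (2 * t)) t := by
      have ha : HasDerivAt (fun t : ℝ => q * x ^ (-q - 1) * t) (q * x ^ (-q - 1)) t := by
        simpa using (hasDerivAt_id t).const_mul (q * x ^ (-q - 1))
      have hb : HasDerivAt (fun t : ℝ => C * t ^ 2) (C * (2 * t)) t := by
        simpa using (hasDerivAt_pow 2 t).const_mul C
      exact ((((hasDerivAt_const t (x ^ (-q))).sub ha).add hb).congr_deriv (by ring))
    have := h3.sub h2
    exact this.congr_deriv (by ring)
  -- derivative bound pieces
  have hm2 : ∀ y : ℝ, m ≤ y → y ^ (-q - 2) ≤ m ^ (-q - 2) := fun y hy =>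
    Real.rpow_le_rpow_of_nonpos hm hy (by linarith)
  have key_nonneg : ∀ t : ℝ, 0 ≤ t →
      0 ≤ -(q * x ^ (-q - 1)) + C * (2 * t) + q * (x + t) ^ (-q - 1) := by
    intro t ht
    have hxt : x ≤ x + t := by linarith
    have hlip := lip_upper (p := q + 1) (by linarith) hx hxt
    rw [show -(q + 1) = -q - 1 from by ring, show -q - 1 - 1 = -q - 2 from by ring] at hlip
    have hx2 : x ^ (-q - 2) ≤ m ^ (-q - 2) := hm2 x hmx
    have : x ^ (-q - 1) - (x + t) ^ (-q - 1) ≤ (q + 1) * m ^ (-q - 2) * t := by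
      calc x ^ (-q - 1) - (x + t) ^ (-q - 1) ≤ (q + 1) * x ^ (-q - 2) * (x + t - x) := hlip
        _ = (q + 1) * x ^ (-q - 2) * t := by ring_nf
        _ ≤ (q + 1) * m ^ (-q - 2) * t := by
            apply mul_le_mul_of_nonneg_right _ ht
            exact mul_le_mul_of_nonneg_left hx2 (by linarith)
    have hCt : C * (2 * t) = q * ((q + 1) * m ^ (-q - 2) * t) := by rw [hC]; ring
    nlinarith [mul_le_mul_of_nonneg_left this hq.le]
  have key_nonpos : ∀ t : ℝ, t ≤ 0 → m ≤ x + t →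
      -(q * x ^ (-q - 1)) + C * (2 * t) + q * (x + t) ^ (-q - 1) ≤ 0 := by
    intro t ht hmt
    have hxt0 : 0 < x + t := lt_of_lt_of_le hm hmt
    have hlip := lip_upper (p := q + 1) (by linarith) hxt0 (by linarith : x + t ≤ x)
    rw [show -(q + 1) = -q - 1 from by ring, show -q - 1 - 1 = -q - 2 from by ring] at hlip
    have hx2 : (x + t) ^ (-q - 2) ≤ m ^ (-q - 2) := hm2 _ hmt
    have : (x + t) ^ (-q - 1) - x ^ (-q - 1) ≤ (q + 1) * m ^ (-q - 2) * (-t) := by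
      calc (x + t) ^ (-q - 1) - x ^ (-q - 1) ≤ (q + 1) * (x + t) ^ (-q - 2) * (x - (x + t)) :=
            hlip
        _ = (q + 1) * (x + t) ^ (-q - 2) * (-t) := by ring_nf
        _ ≤ (q + 1) * m ^ (-q - 2) * (-t) := by
            apply mul_le_mul_of_nonneg_right _ (by linarith)
            exact mul_le_mul_of_nonneg_left hx2 (by linarith)
    have hCt : C * (2 * t) = -(q * ((q + 1) * m ^ (-q - 2) * (-t))) := by rw [hC]; ring
    nlinarith [mul_le_mul_of_nonneg_left this hq.le]
  -- split on sign of h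
  have main : 0 ≤ φ h := by
    rcases le_or_gt 0 h with hh | hh
    · have hmono : MonotoneOn φ (Set.Icc 0 h) := by
        apply monotoneOn_of_deriv_nonneg (convex_Icc 0 h)
        · intro t ht
          have : 0 < x + t := by have := ht.1; linarith
          exact ((hder t this).continuousAt).continuousWithinAt
        · intro t ht
          rw [interior_Icc] at ht
          have : 0 < x + t := by have := ht.1; linarith
          exact ((hder t this).differentiableAt).differentiableWithinAt
        · intro t ht
          rw [interior_Icc] at ht
          have hpos : 0 < x + t := by have := ht.1; linarith
          rw [(hder t hpos).deriv]
          exact key_nonneg t ht.1.le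
      have := hmono (Set.left_mem_Icc.mpr hh) (Set.right_mem_Icc.mpr hh) hh
      rwa [hφ0] at this
    · have hanti : AntitoneOn φ (Set.Icc h 0) := by
        apply antitoneOn_of_deriv_nonpos (convex_Icc h 0)
        · intro t ht
          have : 0 < x + t := lt_of_lt_of_le hm (le_trans hmxh (by linarith [ht.1]))
          exact ((hder t this).continuousAt).continuousWithinAt
        · intro t ht
          rw [interior_Icc] at ht
          have : 0 < x + t := lt_of_lt_of_le hm (le_trans hmxh (by linarith [ht.1.le]))
          exact ((hder t this).differentiableAt).differentiableWithinAt
        · intro t ht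
          rw [interior_Icc] at ht
          have hmt : m ≤ x + t := le_trans hmxh (by linarith [ht.1.le])
          have hpos : 0 < x + t := lt_of_lt_of_le hm hmt
          rw [(hder t hpos).deriv]
          exact key_nonpos t ht.2.le hmt
      have := hanti (Set.left_mem_Icc.mpr hh.le) (Set.right_mem_Icc.mpr hh.le) hh.le
      rwa [hφ0] at this
  have : 0 ≤ x ^ (-q) - q * x ^ (-q - 1) * h + C * h ^ 2 - (x + h) ^ (-q) := main
  linarith

namespace S17

/-- the neighbor map -/
def nbr {n : ℕ} (x : Fin n → ℤ) (p : Fin n × Bool) : Fin n → ℤ :=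
  Function.update x p.1 (x p.1 + if p.2 then 1 else -1)

lemma latAdj_nbr {n : ℕ} (x : Fin n → ℤ) (p : Fin n × Bool) : latAdj x (nbr x p) := by
  refine ⟨p.1, ?_, fun i hi => Function.update_of_ne hi _ _⟩
  rcases p with ⟨k, b⟩
  cases b
  · right; simp [nbr, Function.update_self]; ring
  · left; simp [nbr, Function.update_self]

lemma mem_nbr {n : ℕ} (x y : Fin n → ℤ) (h : latAdj x y) : ∃ p, y = nbr x p := by
  obtain ⟨k, hk, hrest⟩ := h
  rcases hk with hk | hk
  · exact ⟨(k, true), funext fun i => by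
      by_cases hik : i = k
      · subst hik; simp [nbr, Function.update_self, hk]
      · simp [nbr, Function.update_of_ne hik, hrest i hik]⟩
  · exact ⟨(k, false), funext fun i => by
      by_cases hik : i = k
      · subst hik; simp [nbr, Function.update_self, hk]; ring
      · simp [nbr, Function.update_of_ne hik, hrest i hik]⟩

lemma nbr_inj {n : ℕ} (x : Fin n → ℤ) : Function.Injective (nbr x) := by
  rintro ⟨k, b⟩ ⟨l, c⟩ hpq
  have hkl : k = l := by
    by_contra hne
    have h1 := congrFun hpq l
    rw [nbr, nbr] at h1
    simp only at h1
    rw [Function.update_of_ne (Ne.symm hne)] at h1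
    rw [Function.update_self] at h1
    cases c <;> simp at h1 <;> omega
  subst hkl
  have h2 := congrFun hpq k
  rw [nbr, nbr] at h2
  simp only at h2
  rw [Function.update_self, Function.update_self] at h2
  cases b <;> cases c
  · rfl
  · exfalso; rw [if_neg (by simp), if_pos rfl] at h2; omega
  · exfalso; rw [if_pos rfl, if_neg (by simp)] at h2; omega
  · rfl

lemma latLap_eq {n : ℕ} (f : (Fin n → ℤ) → ℝ) (x : Fin n → ℤ) :
    latLap f x = (1 / (2 * (n:ℝ))) *
      ∑ k : Fin n, ((f (Function.update x k (x k + 1)) - f x) +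
                    (f (Function.update x k (x k - 1)) - f x)) := by
  rw [latLap]
  congr 1
  have h0 : ∀ y ∉ (Finset.univ.image (nbr x)), latw x y * (f y - f x) = 0 := by
    intro y hy
    rw [latw]
    split_ifs with hadj
    · exfalso
      obtain ⟨p, hp⟩ := mem_nbr x y hadj
      exact hy (Finset.mem_image.mpr ⟨p, Finset.mem_univ p, hp.symm⟩)
    · ring
  rw [tsum_eq_sum h0]
  rw [Finset.sum_image (fun a _ b _ h => nbr_inj x h)]
  have h1 : ∀ p : Fin n × Bool, latw x (nbr x p) * (f (nbr x p) - f x)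
      = f (nbr x p) - f x := by
    intro p
    rw [latw, if_pos (latAdj_nbr x p), one_mul]
  simp_rw [h1]
  rw [Fintype.sum_prod_type]
  apply Finset.sum_congr rfl
  intro k _
  rw [Fintype.sum_bool]
  have e1 : nbr x (k, true) = Function.update x k (x k + 1) := by simp [nbr]
  have e2 : nbr x (k, false) = Function.update x k (x k - 1) := by
    simp [nbr, sub_eq_add_neg]
  rw [e1, e2]

lemma nsq_update {n : ℕ} (x : Fin n → ℤ) (k : Fin n) (v : ℤ) :
    nsq (Function.update x k v) = nsq x - ((x k:ℝ))^2 + ((v:ℝ))^2 := by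
  unfold nsq
  have key : ∀ i : Fin n, ((Function.update x k v i : ℤ):ℝ)^2
      = Function.update (fun i => ((x i:ℝ))^2) k ((v:ℝ)^2) i := by
    intro i
    by_cases h : i = k
    · subst h; simp
    · simp [Function.update_of_ne h]
  simp_rw [key]
  rw [Finset.sum_update_of_mem (Finset.mem_univ k)]
  rw [← Finset.sum_erase_add _ _ (Finset.mem_univ k)]
  rw [Finset.sdiff_singleton_eq_erase]
  ring

end S17



set_option maxHeartbeats 1000000 in
/-- on `ℤⁿ`, `n ≥ 3`, if `0 < V(x) ≤ c₀ (1+|x|)^{-α}` with `α > 2`, then there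
are `σ, K, γ > 0`, `γ < (n-2)/2`, `γ ≤ (α-2)/2`, such that `h(x) = σ (K + |x|²)^{-γ}`
satisfies `(1/V(x)) Δh(x) ≤ -1` for every `x` with `|x| ≥ 1`. -/
theorem stmt17 {n : ℕ} (hn : 3 ≤ n) (V : (Fin n → ℤ) → ℝ) (c₀ α : ℝ) (hα : 2 < α)
    (hV : ∀ x, 0 < V x ∧ V x ≤ c₀ * (1 + nrm x) ^ (-α)) :
    ∃ σ K γ : ℝ, 0 < σ ∧ 0 < K ∧ 0 < γ ∧ γ < ((n : ℝ) - 2) / 2 ∧ γ ≤ (α - 2) / 2 ∧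
      ∀ x : Fin n → ℤ, 1 ≤ nrm x →
        (1 / V x) * latLap (fun y => σ * (K + nsq y) ^ (-γ)) x ≤ -1 := by
  have hn3 : (3:ℝ) ≤ (n:ℝ) := by exact_mod_cast hn
  have hnpos : (0:ℝ) < (n:ℝ) := by linarith
  -- c₀ is positive
  have hc₀ : 0 < c₀ := by
    have h1 := (hV (fun _ => 0)).1
    have h2 := (hV (fun _ => 0)).2
    have h3 : (0:ℝ) < (1 + nrm (fun _ => (0:ℤ) : Fin n → ℤ)) ^ (-α) := by
      apply Real.rpow_pos_of_pos
      have : 0 ≤ nrm (fun _ => (0:ℤ) : Fin n → ℤ) := Real.sqrt_nonneg _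
      linarith
    by_contra hc
    push_neg at hc
    nlinarith
  set γ : ℝ := min (1/8) ((α - 2)/2) with hγdef
  have hγ0 : 0 < γ := lt_min (by norm_num) (by linarith)
  have hγ8 : γ ≤ 1/8 := min_le_left _ _
  have hγα : γ ≤ (α - 2)/2 := min_le_right _ _
  have hγ1 : γ ≤ 1 := hγ8.trans (by norm_num)
  set K : ℝ := 4000 with hKdef
  have hKpos : (0:ℝ) < K := by norm_num
  have hK1 : (0:ℝ) < K + 1 := by norm_num
  have hKp : (0:ℝ) < (K+1) ^ (γ+1) := Real.rpow_pos_of_pos hK1 _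
  set σ : ℝ := 2 * (n:ℝ) * c₀ * (K+1) ^ (γ+1) / γ + 1 with hσdef
  have hσpos : 0 < σ := by
    rw [hσdef]; positivity
  refine ⟨σ, K, γ, hσpos, hKpos, hγ0, ?_, hγα, ?_⟩
  · calc γ ≤ 1/8 := hγ8
      _ < ((n:ℝ) - 2)/2 := by linarith
  intro x hx
  -- basic quantities
  set s : ℝ := nsq x with hsdef
  have hs0 : 0 ≤ s := Finset.sum_nonneg fun i _ => sq_nonneg _
  have hsq : Real.sqrt s ^ 2 = s := Real.sq_sqrt hs0
  have hsnn : 0 ≤ Real.sqrt s := Real.sqrt_nonneg s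
  have hx1 : 1 ≤ Real.sqrt s := hx
  have hs1 : 1 ≤ s := by nlinarith
  set T : ℝ := K + s + 1 with hTdef
  have hT : 4002 ≤ T := by simp only [hTdef, hKdef]; linarith
  have hTpos : 0 < T := by linarith
  have hsT : s ≤ T := by simp only [hTdef]; linarith
  have hsqT2 : Real.sqrt T ^ 2 = T := Real.sq_sqrt hTpos.le
  have hsqTnn : 0 ≤ Real.sqrt T := Real.sqrt_nonneg T
  have h63 : (63:ℝ) ≤ Real.sqrt T := by nlinarith
  have hsqT63 : Real.sqrt T ≤ T / 63 := by nlinarith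
  have hsqsT : Real.sqrt s ≤ Real.sqrt T := Real.sqrt_le_sqrt hsT
  set m : ℝ := (61/63) * T with hmdef
  have hmpos : 0 < m := by positivity
  have hmT : m ≤ T := by nlinarith
  -- powers
  set P : ℝ := T ^ (-γ - 1) with hPdef
  set Q : ℝ := T ^ (-γ - 2) with hQdef
  have hPpos : 0 < P := Real.rpow_pos_of_pos hTpos _
  have hQpos : 0 < Q := Real.rpow_pos_of_pos hTpos _
  have hQP : Q * T = P := by
    rw [hQdef, hPdef, ← Real.rpow_add_one hTpos.ne' (-γ - 2)]
    congr 1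
    ring
  set M : ℝ := m ^ (-γ - 2) with hMdef
  have hMpos : 0 < M := Real.rpow_pos_of_pos hmpos _
  -- per-coordinate estimate
  have claim : ∀ k : Fin n,
      (K + nsq (Function.update x k (x k + 1))) ^ (-γ)
        + (K + nsq (Function.update x k (x k - 1))) ^ (-γ)
        - 2 * (K + s) ^ (-γ)
      ≤ -(2 * γ * P) + 4 * γ * (γ + 1) * ((x k : ℝ))^2 * M := by
    intro k
    set a : ℝ := ((x k : ℝ)) with hadef
    have ha2 : a^2 ≤ s := by
      rw [hsdef, hadef]
      exact Finset.single_le_sum (f := fun i => ((x i : ℝ))^2)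
        (fun i _ => sq_nonneg _) (Finset.mem_univ k)
    have habs : |a| ≤ Real.sqrt s := by
      rw [← Real.sqrt_sq_eq_abs]
      exact Real.sqrt_le_sqrt ha2
    have habs' : |a| ≤ T / 63 := le_trans habs (le_trans hsqsT hsqT63)
    have hm1 : m ≤ T + 2 * a := by
      have := neg_abs_le a
      simp only [hmdef]; nlinarith
    have hm2 : m ≤ T + -(2 * a) := by
      have := le_abs_self a
      simp only [hmdef]; nlinarith
    have hplus : K + nsq (Function.update x k (x k + 1)) = T + 2 * a := by
      rw [S17.nsq_update]
      simp only [hTdef, hadef, ← hsdef]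
      push_cast
      ring
    have hminus : K + nsq (Function.update x k (x k - 1)) = T + -(2 * a) := by
      rw [S17.nsq_update]
      simp only [hTdef, hadef, ← hsdef]
      push_cast
      ring
    have t1 := taylor2 (q := γ) (x := T) (h := 2 * a) (m := m) hγ0 hmpos hmT hm1
    have t2 := taylor2 (q := γ) (x := T) (h := -(2 * a)) (m := m) hγ0 hmpos hmT hm2
    have tangent := tangent_lower (q := γ) (a := K + s) (b := T) hγ0 hγ1
      (by simp only [hKdef]; linarith) (by simp only [hTdef]; linarith)
    have hTK : T - (K + s) = 1 := by simp only [hTdef]; ring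
    rw [hTK, mul_one] at tangent
    -- tangent : γ * T^(-γ-1) ≤ (K+s)^(-γ) - T^(-γ)
    rw [hplus, hminus]
    have hsq1 : (-(2*a))^2 = (2*a)^2 := by ring
    rw [hsq1] at t2
    have h2a : (2*a)^2 = 4 * a^2 := by ring
    rw [h2a] at t1 t2
    rw [← hPdef, ← hMdef] at t1 t2
    rw [← hPdef] at tangent
    linarith [t1, t2, tangent]
  -- sum the claim over k
  have sum_claim : ∑ k : Fin n,
      (((fun y => σ * (K + nsq y) ^ (-γ)) (Function.update x k (x k + 1))
          - (fun y => σ * (K + nsq y) ^ (-γ)) x)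
        + ((fun y => σ * (K + nsq y) ^ (-γ)) (Function.update x k (x k - 1))
          - (fun y => σ * (K + nsq y) ^ (-γ)) x))
      ≤ σ * (-(γ * P)) := by
    have step : ∀ k : Fin n,
        (((fun y => σ * (K + nsq y) ^ (-γ)) (Function.update x k (x k + 1))
            - (fun y => σ * (K + nsq y) ^ (-γ)) x)
          + ((fun y => σ * (K + nsq y) ^ (-γ)) (Function.update x k (x k - 1))
            - (fun y => σ * (K + nsq y) ^ (-γ)) x))
        ≤ σ * (-(2 * γ * P) + 4 * γ * (γ + 1) * ((x k : ℝ))^2 * M) := by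
      intro k
      dsimp only
      have := claim k
      have hσnn : 0 ≤ σ := hσpos.le
      rw [← hsdef]
      linarith [mul_le_mul_of_nonneg_left this hσnn]
    calc _ ≤ ∑ k : Fin n, σ * (-(2 * γ * P) + 4 * γ * (γ + 1) * ((x k : ℝ))^2 * M) :=
          Finset.sum_le_sum fun k _ => step k
      _ = σ * ((n:ℝ) * (-(2 * γ * P)) + 4 * γ * (γ + 1) * s * M) := by
          rw [← Finset.mul_sum]
          congr 1
          rw [Finset.sum_add_distrib, Finset.sum_const, Finset.card_univ, Fintype.card_fin,
            nsmul_eq_mul]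
          congr 1
          have hterm : ∀ k : Fin n, 4 * γ * (γ + 1) * ((x k : ℝ))^2 * M
              = (4 * γ * (γ + 1) * M) * ((x k : ℝ))^2 := fun k => by ring
          simp_rw [hterm]
          rw [← Finset.mul_sum]
          rw [hsdef, nsq]
          ring
      _ ≤ σ * (-(γ * P)) := by
          -- numeric bound : 4γ(γ+1) s M ≤ (2n-1) γ P
          have hMle : M ≤ (10/9) * Q := by
            have e1 : M = (61/63 : ℝ) ^ (-γ - 2) * Q := by
              rw [hMdef, hQdef, hmdef, Real.mul_rpow (by norm_num) hTpos.le]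
            have e2 : (61/63 : ℝ) ^ (-γ - 2) = (63/61 : ℝ) ^ (γ + 2) := by
              rw [show (-γ - 2 : ℝ) = -(γ+2) by ring, Real.rpow_neg (by norm_num : (0:ℝ) ≤ 61/63),
                ← Real.inv_rpow (by norm_num : (0:ℝ) ≤ 61/63)]
              norm_num
            have e3 : (63/61 : ℝ) ^ (γ + 2) ≤ (63/61 : ℝ) ^ ((3:ℕ):ℝ) :=
              Real.rpow_le_rpow_of_exponent_le (by norm_num) (by push_cast; linarith)
            have e4 : (63/61 : ℝ) ^ ((3:ℕ):ℝ) ≤ 10/9 := by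
              rw [Real.rpow_natCast]
              norm_num
            calc M = (61/63 : ℝ) ^ (-γ - 2) * Q := e1
              _ ≤ (10/9) * Q := by
                  apply mul_le_mul_of_nonneg_right _ hQpos.le
                  calc (61/63 : ℝ) ^ (-γ - 2) = (63/61 : ℝ) ^ (γ + 2) := e2
                    _ ≤ 10/9 := e3.trans e4
          have hnum : 4 * γ * (γ + 1) * s * M ≤ (2 * (n:ℝ) - 1) * γ * P := by
            have c1 : 4 * γ * (γ + 1) * s * M ≤ 4 * γ * (γ + 1) * s * ((10/9) * Q) := by
              apply mul_le_mul_of_nonneg_left hMle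
              positivity
            have c3 : s * Q ≤ P := by
              calc s * Q ≤ T * Q := mul_le_mul_of_nonneg_right hsT hQpos.le
                _ = P := by rw [mul_comm]; exact hQP
            have c5 : 4 * γ * (γ + 1) * s * ((10/9) * Q) ≤ (40/9) * γ * (γ + 1) * P := by
              have := mul_le_mul_of_nonneg_left c3
                (show (0:ℝ) ≤ (40/9) * γ * (γ + 1) by positivity)
              linarith
            have c6 : (40/9) * γ * (γ + 1) * P ≤ 5 * γ * P := by
              have h1 : (40/9 : ℝ) * (γ + 1) ≤ 5 := by linarith
              calc (40/9) * γ * (γ + 1) * P = ((40/9) * (γ + 1)) * (γ * P) := by ring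
                _ ≤ 5 * (γ * P) := mul_le_mul_of_nonneg_right h1 (by positivity)
                _ = 5 * γ * P := by ring
            have c7 : 5 * γ * P ≤ (2 * (n:ℝ) - 1) * γ * P := by
              have h1 : (5:ℝ) ≤ 2 * (n:ℝ) - 1 := by linarith
              calc 5 * γ * P = 5 * (γ * P) := by ring
                _ ≤ (2 * (n:ℝ) - 1) * (γ * P) := mul_le_mul_of_nonneg_right h1 (by positivity)
                _ = (2 * (n:ℝ) - 1) * γ * P := by ring
            linarith
          apply mul_le_mul_of_nonneg_left _ hσpos.le
          linarith
  -- the Laplacian bound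
  have hlap : latLap (fun y => σ * (K + nsq y) ^ (-γ)) x ≤ (1/(2*(n:ℝ))) * (σ * (-(γ * P))) := by
    rw [S17.latLap_eq]
    apply mul_le_mul_of_nonneg_left sum_claim
    positivity
  -- bound on V
  have hVle : V x ≤ c₀ * ((K+1) ^ (γ+1) * P) := by
    have h1 := (hV x).2
    set B : ℝ := 1 + nrm x with hBdef
    have hB1 : (1:ℝ) ≤ B := by
      have : 0 ≤ nrm x := Real.sqrt_nonneg _
      simp only [hBdef]; linarith
    have e1 : B ^ (-α) ≤ B ^ (-(2*γ+2)) :=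
      Real.rpow_le_rpow_of_exponent_le hB1 (by linarith)
    have e2 : B ^ (-(2*γ+2)) = (B^2) ^ (-(γ+1)) := by
      rw [← Real.rpow_natCast B 2, ← Real.rpow_mul (by linarith : (0:ℝ) ≤ B)]
      congr 1
      push_cast
      ring
    have hTB : T / (K+1) ≤ B^2 := by
      rw [div_le_iff₀ hK1]
      have hnrm : nrm x = Real.sqrt s := rfl
      simp only [hBdef, hnrm, hTdef, hKdef]
      have expand : (1 + Real.sqrt s)^2 = 1 + 2*Real.sqrt s + s := by
        linear_combination hsq
      rw [expand]
      linarith [hsnn]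
    have e3 : (B^2) ^ (-(γ+1)) ≤ (T/(K+1)) ^ (-(γ+1)) := by
      apply Real.rpow_le_rpow_of_nonpos (by positivity) hTB (by linarith)
    have e4 : (T/(K+1)) ^ (-(γ+1)) = (K+1) ^ (γ+1) * T ^ (-(γ+1)) := by
      rw [Real.div_rpow hTpos.le hK1.le, Real.rpow_neg hK1.le (γ+1), div_eq_mul_inv, inv_inv]
      ring
    have e5 : T ^ (-(γ+1)) = P := by
      rw [hPdef]
      congr 1
      ring
    calc V x ≤ c₀ * B ^ (-α) := h1
      _ ≤ c₀ * ((K+1) ^ (γ+1) * P) := by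
          apply mul_le_mul_of_nonneg_left _ hc₀.le
          rw [← e5, ← e4]
          exact le_trans e1 (le_trans (le_of_eq e2) e3)
  -- conclusion
  have hVpos := (hV x).1
  have hσγ : σ * γ = 2 * (n:ℝ) * c₀ * (K+1) ^ (γ+1) + γ := by
    rw [hσdef]
    field_simp
  have hfinal : latLap (fun y => σ * (K + nsq y) ^ (-γ)) x ≤ -(V x) := by
    have h2 : (1/(2*(n:ℝ))) * (σ * (-(γ * P))) ≤ -(V x) := by
      have h3 : V x ≤ (1/(2*(n:ℝ))) * (σ * γ * P) := by
        have h4 : (1/(2*(n:ℝ))) * (σ * γ * P) = c₀ * ((K+1) ^ (γ+1) * P) + (γ/(2*(n:ℝ))) * P := by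
          rw [hσγ]
          field_simp
        have h5 : 0 ≤ (γ/(2*(n:ℝ))) * P := by positivity
        rw [h4]
        exact le_trans hVle (le_add_of_nonneg_right h5)
      linarith
    exact le_trans hlap h2
  rw [one_div, inv_mul_le_iff₀ hVpos]
  linarith
end
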